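/- arXiv:2508.15997 — 5 statements merged into one kernel-verified Lean document; each statement's English description precedes it below -/
import Mathlib

section
/- Let n ≥ 1, 0 < α < 1 and C > 0. Let u : ℝⁿ × ℝ → ℝ be smooth (C^∞) and satisfy the heat equation ∂_t u = Δu at every point. If for every R ≥ 1 one has sup_{(y,s) ∈ Q_R} |u(y,s) − u(0,0) − ⟨∇u(0,0), y⟩| ≤ C R^{1+α}, then u is affine: u(y,s) = u(0,0) + ⟨∇u(0,0), y⟩ for every (y,s) ∈ ℝⁿ × ℝ. -/
open MeasureTheory Metric Set Filter

noncomputable section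

abbrev Spc (n : ℕ) := EuclideanSpace ℝ (Fin n)

/-- Parabolic cylinder `Q_r(x,t)`. -/
def Qcyl (n : ℕ) (r : ℝ) (x : Spc n) (t : ℝ) : Set (Spc n × ℝ) :=
  {p : Spc n × ℝ | ‖p.1 - x‖ + Real.sqrt |p.2 - t| < r}

/-- Time derivative `∂ₜ u`. -/
def timeDeriv {n : ℕ} (u : Spc n × ℝ → ℝ) (p : Spc n × ℝ) : ℝ :=
  deriv (fun s => u (p.1, s)) p.2

/-- Spatial gradient `∇u`. -/
def spGrad {n : ℕ} (u : Spc n × ℝ → ℝ) (p : Spc n × ℝ) : Spc n :=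
  gradient (fun y => u (y, p.2)) p.1

/-- The point `p` translated by `h` in the `i`-th spatial direction. -/
def dirPoint {n : ℕ} (p : Spc n × ℝ) (i : Fin n) (h : ℝ) : Spc n × ℝ :=
  (p.1 + h • EuclideanSpace.single i (1 : ℝ), p.2)

/-- Second spatial partial `∂ᵢⱼ u`, as derivative of the `i`-th component of
the spatial gradient in direction `j`. -/
def secondPartial {n : ℕ} (u : Spc n × ℝ → ℝ) (i j : Fin n) (p : Spc n × ℝ) : ℝ :=
  deriv (fun h : ℝ => spGrad u (dirPoint p j h) i) 0

/-- Spatial Laplacian `Δu`. -/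
def lapl {n : ℕ} (u : Spc n × ℝ → ℝ) (p : Spc n × ℝ) : ℝ :=
  ∑ i, secondPartial u i i p

/-- `u` is a strong solution of `∂ₜ u - Δu = g · χ_{u>0}` on `U`:
continuous with continuous spatial gradient, and a.e. on `U` the time derivative and
the pure second spatial partials exist and the equation holds. -/
def IsStrongSolution {n : ℕ} (u : Spc n × ℝ → ℝ) (g : ℝ) (U : Set (Spc n × ℝ)) : Prop :=
  ContinuousOn u U ∧
  (∀ p ∈ U, HasGradientAt (fun y => u (y, p.2)) (spGrad u p) p.1) ∧
  ContinuousOn (fun p => spGrad u p) U ∧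
  (∀ᵐ p ∂(volume.restrict U),
    HasDerivAt (fun s => u (p.1, s)) (timeDeriv u p) p.2 ∧
    (∀ i : Fin n, HasDerivAt (fun h : ℝ => spGrad u (dirPoint p i h) i) (secondPartial u i i p) 0) ∧
    timeDeriv u p - lapl u p = (if 0 < u p then g else 0))

/-- The free boundary `Γ = ∂{u>0}` relative to the open set `U`. -/
def freeBdry {n : ℕ} (u : Spc n × ℝ → ℝ) (U : Set (Spc n × ℝ)) : Set (Spc n × ℝ) :=
  U ∩ frontier {p : Spc n × ℝ | 0 < u p}

namespace Liouville

open InnerProductSpace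

variable {n : ℕ}

/-- Directional derivative of `f` at `p` in direction `v`. -/
def Dv (v : Spc n × ℝ) (f : Spc n × ℝ → ℝ) (p : Spc n × ℝ) : ℝ := fderiv ℝ f p v

/-- `i`-th spatial unit direction. -/
def ev (n : ℕ) (i : Fin n) : Spc n × ℝ := (EuclideanSpace.single i (1:ℝ), 0)

/-- spatial partial derivative -/
def pd (i : Fin n) (f : Spc n × ℝ → ℝ) : Spc n × ℝ → ℝ := Dv (ev n i) f

/-- time derivative -/
def pt (f : Spc n × ℝ → ℝ) : Spc n × ℝ → ℝ := Dv (0, 1) f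

theorem contDiff_Dv (v : Spc n × ℝ) {f : Spc n × ℝ → ℝ} (hf : ContDiff ℝ (⊤ : ℕ∞) f) :
    ContDiff ℝ (⊤ : ℕ∞) (Dv v f) :=
  (hf.fderiv_right (by simp)).clm_apply contDiff_const

theorem hasFDerivAt' {f : Spc n × ℝ → ℝ} (hf : ContDiff ℝ (⊤ : ℕ∞) f) (p : Spc n × ℝ) :
    HasFDerivAt f (fderiv ℝ f p) p :=
  (hf.differentiable (by simp)).differentiableAt.hasFDerivAt

theorem Dv_add (v : Spc n × ℝ) {f g : Spc n × ℝ → ℝ} (hf : ContDiff ℝ (⊤ : ℕ∞) f)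
    (hg : ContDiff ℝ (⊤ : ℕ∞) g) (p : Spc n × ℝ) :
    Dv v (fun q => f q + g q) p = Dv v f p + Dv v g p := by
  unfold Dv
  rw [fderiv_fun_add (hf.differentiable (by simp)).differentiableAt
    (hg.differentiable (by simp)).differentiableAt]
  rfl

theorem Dv_mul (v : Spc n × ℝ) {f g : Spc n × ℝ → ℝ} (hf : ContDiff ℝ (⊤ : ℕ∞) f)
    (hg : ContDiff ℝ (⊤ : ℕ∞) g) (p : Spc n × ℝ) :
    Dv v (fun q => f q * g q) p = Dv v f p * g p + f p * Dv v g p := by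
  unfold Dv
  rw [fderiv_fun_mul (hf.differentiable (by simp)).differentiableAt
    (hg.differentiable (by simp)).differentiableAt]
  simp only [ContinuousLinearMap.add_apply, ContinuousLinearMap.smul_apply, smul_eq_mul]
  ring

theorem Dv_const (v : Spc n × ℝ) (c : ℝ) (p : Spc n × ℝ) :
    Dv v (fun _ => c) p = 0 := by
  unfold Dv; rw [fderiv_fun_const]; simp

theorem Dv_const_mul (v : Spc n × ℝ) {f : Spc n × ℝ → ℝ} (hf : ContDiff ℝ (⊤ : ℕ∞) f) (c : ℝ)
    (p : Spc n × ℝ) : Dv v (fun q => c * f q) p = c * Dv v f p := by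
  unfold Dv
  rw [fderiv_const_mul (hf.differentiable (by simp)).differentiableAt]
  simp

theorem Dv_sub (v : Spc n × ℝ) {f g : Spc n × ℝ → ℝ} (hf : ContDiff ℝ (⊤ : ℕ∞) f)
    (hg : ContDiff ℝ (⊤ : ℕ∞) g) (p : Spc n × ℝ) :
    Dv v (fun q => f q - g q) p = Dv v f p - Dv v g p := by
  unfold Dv
  rw [fderiv_fun_sub (hf.differentiable (by simp)).differentiableAt
    (hg.differentiable (by simp)).differentiableAt]
  rfl

theorem Dv_sum (v : Spc n × ℝ) {ι : Type*} (s : Finset ι) {f : ι → Spc n × ℝ → ℝ}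
    (hf : ∀ i, ContDiff ℝ (⊤ : ℕ∞) (f i)) (p : Spc n × ℝ) :
    Dv v (fun q => ∑ i ∈ s, f i q) p = ∑ i ∈ s, Dv v (f i) p := by
  unfold Dv
  rw [fderiv_fun_sum (fun i _ => ((hf i).differentiable (by simp)).differentiableAt)]
  simp

/-- symmetry of second derivatives -/
theorem Dv_comm (v w : Spc n × ℝ) {f : Spc n × ℝ → ℝ} (hf : ContDiff ℝ (⊤ : ℕ∞) f) (p : Spc n × ℝ) :
    Dv v (Dv w f) p = Dv w (Dv v f) p := by
  have hdf : DifferentiableAt ℝ (fderiv ℝ f) p :=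
    ((hf.fderiv_right (m := (⊤ : ℕ∞)) (by simp)).differentiable (by simp)).differentiableAt
  have key : ∀ a b : Spc n × ℝ, Dv a (Dv b f) p = fderiv ℝ (fderiv ℝ f) p a b := by
    intro a b
    unfold Dv
    rw [fderiv_clm_apply hdf (differentiableAt_const b)]
    simp
  rw [key, key]
  exact second_derivative_symmetric (fun y => hasFDerivAt' hf y) hdf.hasFDerivAt v w

end Liouville
namespace Liouville

open InnerProductSpace

variable {n : ℕ} {f : Spc n × ℝ → ℝ}

/-- time slice curve derivative -/
theorem hasDerivAt_timeSlice (hf : ContDiff ℝ (⊤ : ℕ∞) f) (x : Spc n) (t : ℝ) :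
    HasDerivAt (fun s => f (x, s)) (pt f (x, t)) t := by
  have h1 : HasDerivAt (fun s : ℝ => ((x : Spc n), s)) ((0 : Spc n), (1 : ℝ)) t :=
    HasDerivAt.prodMk (hasDerivAt_const t x) (hasDerivAt_id t)
  exact (hasFDerivAt' hf (x, t)).comp_hasDerivAt t h1

theorem timeDeriv_eq (hf : ContDiff ℝ (⊤ : ℕ∞) f) (p : Spc n × ℝ) :
    timeDeriv f p = pt f p :=
  (hasDerivAt_timeSlice hf p.1 p.2).deriv

/-- spatial slice fderiv -/
theorem hasFDerivAt_spaceSlice (hf : ContDiff ℝ (⊤ : ℕ∞) f) (x : Spc n) (t : ℝ) :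
    HasFDerivAt (fun y => f (y, t))
      ((fderiv ℝ f (x, t)).comp (ContinuousLinearMap.inl ℝ (Spc n) ℝ)) x :=
  (hasFDerivAt' hf (x, t)).comp x (hasFDerivAt_prodMk_left x t)

theorem spGrad_apply (hf : ContDiff ℝ (⊤ : ℕ∞) f) (p : Spc n × ℝ) (i : Fin n) :
    spGrad f p i = pd i f p := by
  have hg := (hasFDerivAt_spaceSlice hf p.1 p.2).fderiv
  have : spGrad f p i = ⟪(spGrad f p : Spc n), EuclideanSpace.single i (1:ℝ)⟫_ℝ := by
    rw [EuclideanSpace.inner_single_right]; simp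
  rw [this]
  unfold spGrad gradient
  rw [← InnerProductSpace.toDual_apply_apply,
    LinearIsometryEquiv.apply_symm_apply, hg]
  rfl

theorem hasDerivAt_dirSlice {g : Spc n × ℝ → ℝ} (hg : ContDiff ℝ (⊤ : ℕ∞) g) (p : Spc n × ℝ)
    (i : Fin n) : HasDerivAt (fun h : ℝ => g (dirPoint p i h)) (pd i g p) 0 := by
  have h1 : HasDerivAt (fun h : ℝ => dirPoint p i h)
      ((EuclideanSpace.single i (1:ℝ), 0) : Spc n × ℝ) 0 := by
    have hx : HasDerivAt (fun h : ℝ => p.1 + h • EuclideanSpace.single i (1:ℝ))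
        (EuclideanSpace.single i (1:ℝ)) 0 := by
      have := ((hasDerivAt_id (0:ℝ)).smul_const (EuclideanSpace.single i (1:ℝ))).const_add p.1
      simpa using this
    exact HasDerivAt.prodMk hx (hasDerivAt_const 0 p.2)
  have h2 := (hasFDerivAt' hg (dirPoint p i 0)).comp_hasDerivAt 0 h1
  have hp : dirPoint p i 0 = p := by simp [dirPoint]
  rw [hp] at h2
  exact h2

theorem secondPartial_eq (hf : ContDiff ℝ (⊤ : ℕ∞) f) (p : Spc n × ℝ) (i : Fin n) :
    secondPartial f i i p = pd i (pd i f) p := by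
  unfold secondPartial
  have : (fun h : ℝ => spGrad f (dirPoint p i h) i) = fun h : ℝ => pd i f (dirPoint p i h) := by
    funext h; exact spGrad_apply hf _ i
  rw [this]
  exact (hasDerivAt_dirSlice (contDiff_Dv _ hf) p i).deriv

theorem lapl_eq (hf : ContDiff ℝ (⊤ : ℕ∞) f) (p : Spc n × ℝ) :
    lapl f p = ∑ i, pd i (pd i f) p := by
  unfold lapl
  exact Finset.sum_congr rfl fun i _ => secondPartial_eq hf p i

end Liouville
namespace Liouville

open Filter Topology Set

/-- Derivative at right endpoint of an interval where the max is attained is ≥ 0. -/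
theorem deriv_nonneg_right {f : ℝ → ℝ} {a b f' : ℝ} (hab : a < b)
    (hmax : ∀ t ∈ Set.Icc a b, f t ≤ f b) (hf : HasDerivAt f f' b) : 0 ≤ f' := by
  have hs : Tendsto (slope f b) (𝓝[<] b) (𝓝 f') :=
    (hasDerivAt_iff_tendsto_slope.1 hf).mono_left
      (nhdsWithin_mono _ fun x hx => ne_of_lt hx)
  refine ge_of_tendsto hs ?_
  filter_upwards [Ioo_mem_nhdsLT_of_mem (Set.mem_Ioc.2 ⟨hab, le_rfl⟩)] with t ht
  have h1 : f t ≤ f b := hmax t ⟨ht.1.le, ht.2.le⟩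
  have h2 : t - b < 0 := by linarith [ht.2]
  rw [slope_def_field]
  have h3 : f t - f b ≤ 0 := by linarith
  exact div_nonneg_of_nonpos h3 h2.le

/-- Second-derivative test at a local max. -/
theorem secondDeriv_nonpos {g g' : ℝ → ℝ} {L : ℝ}
    (hg' : ∀ x, HasDerivAt g (g' x) x) (hg'' : HasDerivAt g' L 0)
    (hmax : IsLocalMax g 0) : L ≤ 0 := by
  by_contra hL
  push_neg at hL
  have h0 : g' 0 = 0 := by
    have := hmax.deriv_eq_zero
    rwa [(hg' 0).deriv] at this
  -- slope of g' tends to L > 0, so g' > 0 on a right interval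
  have hs : Tendsto (fun h => g' h / h) (𝓝[>] (0:ℝ)) (𝓝 L) := by
    have := (hasDerivAt_iff_tendsto_slope.1 hg'').mono_left
      (nhdsWithin_mono _ fun x (hx : x ∈ Set.Ioi (0:ℝ)) => ne_of_gt hx)
    refine this.congr fun h => ?_
    rw [slope_def_field, h0]; ring_nf
  have hev : ∀ᶠ h in 𝓝[>] (0:ℝ), 0 < g' h := by
    have h1 : ∀ᶠ h in 𝓝[>] (0:ℝ), L / 2 < g' h / h := hs.eventually (eventually_gt_nhds (by linarith))
    filter_upwards [h1, self_mem_nhdsWithin] with h h2 (h3 : 0 < h)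
    have : 0 < g' h / h := lt_trans (by positivity) h2
    exact (div_pos_iff.1 this).resolve_right (fun ⟨_, hh⟩ => absurd h3 (not_lt.2 hh.le)) |>.1
  obtain ⟨δ, hδ, hδpos⟩ : ∃ δ > 0, ∀ h ∈ Set.Ioo (0:ℝ) δ, 0 < g' h := by
    rcases mem_nhdsGT_iff_exists_Ioo_subset.1 hev with ⟨u, hu, hsub⟩
    exact ⟨u, hu, fun h hh => hsub hh⟩
  obtain ⟨δ', hδ'pos, hδ'⟩ : ∃ δ' > 0, ∀ h, |h| < δ' → g h ≤ g 0 := by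
    rcases Metric.mem_nhds_iff.1 hmax with ⟨ε, hε, hball⟩
    exact ⟨ε, hε, fun h hh => hball (by simpa [Real.dist_eq] using hh)⟩
  set η := min δ δ' / 2 with hη
  have hηpos : 0 < η := by positivity
  have hmono : StrictMonoOn g (Set.Icc 0 η) := by
    refine strictMonoOn_of_deriv_pos (convex_Icc _ _)
      (fun x _ => ((hg' x).continuousAt).continuousWithinAt) ?_
    intro x hx
    rw [interior_Icc] at hx
    rw [(hg' x).deriv]
    exact hδpos x ⟨hx.1, lt_of_lt_of_le hx.2 (by
      have := min_le_left δ δ'; linarith)⟩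
  have h1 : g 0 < g η := hmono (Set.left_mem_Icc.2 hηpos.le) (Set.right_mem_Icc.2 hηpos.le) hηpos
  have h2 : g η ≤ g 0 := hδ' η (by
    rw [abs_of_pos hηpos]
    have := min_le_right δ δ'; linarith)
  linarith

end Liouville
namespace Liouville

open Filter Topology Set Metric

variable {n : ℕ}

theorem maxPrinciple (x₀ : Spc n) (t₀ R b : ℝ) (hR : 0 < R)
    {w : Spc n × ℝ → ℝ} (hw : ContDiff ℝ (⊤ : ℕ∞) w)
    (hineq : ∀ p : Spc n × ℝ, ‖p.1 - x₀‖ ≤ R → p.2 ∈ Set.Icc (t₀ - R^2) t₀ →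
      pt w p ≤ ∑ i, pd i (pd i w) p)
    (hbdry : ∀ q : Spc n × ℝ, ‖q.1 - x₀‖ ≤ R → q.2 ∈ Set.Icc (t₀ - R^2) t₀ →
      (‖q.1 - x₀‖ = R ∨ q.2 = t₀ - R^2) → w q ≤ b) :
    ∀ q : Spc n × ℝ, ‖q.1 - x₀‖ ≤ R → q.2 ∈ Set.Icc (t₀ - R^2) t₀ → w q ≤ b := by
  have hR2 : 0 < R ^ 2 := by positivity
  set K : Set (Spc n × ℝ) := Metric.closedBall x₀ R ×ˢ Set.Icc (t₀ - R^2) t₀ with hKdef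
  have hmemK : ∀ q : Spc n × ℝ, q ∈ K ↔ ‖q.1 - x₀‖ ≤ R ∧ q.2 ∈ Set.Icc (t₀ - R^2) t₀ := by
    intro q
    simp [hKdef, Set.mem_prod, Metric.mem_closedBall, dist_eq_norm]
  have hKc : IsCompact K := (isCompact_closedBall _ _).prod isCompact_Icc
  have hKne : ((x₀, t₀) : Spc n × ℝ) ∈ K := by
    rw [hmemK]; constructor
    · simp [hR.le]
    · exact ⟨by linarith, le_rfl⟩
  -- main ε-perturbed claim
  have main : ∀ ε : ℝ, 0 < ε → ∀ q ∈ K, w q ≤ b + ε * R ^ 2 := by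
    intro ε hε q hq
    set wε : Spc n × ℝ → ℝ := fun p => w p - ε * p.2 with hwε
    have hwεc : ContinuousOn wε K :=
      ((hw.continuous.sub (continuous_const.mul continuous_snd)).continuousOn)
    obtain ⟨m, hmK, hm⟩ := hKc.exists_isMaxOn ⟨_, hKne⟩ hwεc
    obtain ⟨hm1, hm2⟩ := (hmemK m).1 hmK
    by_cases hcase : ‖m.1 - x₀‖ = R ∨ m.2 = t₀ - R^2
    · -- max on parabolic boundary
      have hwm : w m ≤ b := hbdry m hm1 hm2 hcase
      have h1 : wε q ≤ wε m := hm hq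
      have hq2 := ((hmemK q).1 hq).2
      simp only [hwε] at h1
      have : q.2 - m.2 ≤ R ^ 2 := by
        have := hq2.2; have := hm2.1; linarith
      nlinarith
    · -- interior max: contradiction
      exfalso
      push_neg at hcase
      have hm1' : ‖m.1 - x₀‖ < R := lt_of_le_of_ne hm1 hcase.1
      have hm2' : t₀ - R ^ 2 < m.2 := lt_of_le_of_ne hm2.1 (Ne.symm hcase.2)
      -- time direction
      have htime : ε ≤ pt w m := by
        set f : ℝ → ℝ := fun s => wε (m.1, s) with hf
        have hfd : HasDerivAt f (pt w (m.1, m.2) - ε) m.2 := by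
          have h1 := hasDerivAt_timeSlice hw m.1 m.2
          have h2 : HasDerivAt (fun s : ℝ => ε * s) ε m.2 := by
            simpa using (hasDerivAt_id m.2).const_mul ε
          exact h1.sub h2
        have hfmax : ∀ t ∈ Set.Icc (t₀ - R^2) t₀, f t ≤ f m.2 := by
          intro t ht
          have : ((m.1, t) : Spc n × ℝ) ∈ K := (hmemK _).2 ⟨hm1, ht⟩
          have := hm this
          simpa [hf, hwε] using this
        rcases eq_or_lt_of_le hm2.2 with hteq | htlt
        · have hfmax' : ∀ t ∈ Set.Icc (t₀ - R^2) m.2, f t ≤ f m.2 := fun t ht =>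
            hfmax t ⟨ht.1, ht.2.trans hteq.le⟩
          have h0 : 0 ≤ pt w (m.1, m.2) - ε := deriv_nonneg_right hm2' hfmax' hfd
          have hmm : (m.1, m.2) = m := by simp
          rw [hmm] at h0; linarith
        · have hloc : IsLocalMax f m.2 := by
            filter_upwards [Icc_mem_nhds hm2' htlt] with t ht
            exact hfmax t ht
          have := hloc.deriv_eq_zero
          rw [hfd.deriv] at this
          have hmm : (m.1, m.2) = m := by simp
          rw [hmm] at this; linarith
      -- spatial directions
      have hspace : ∀ i : Fin n, pd i (pd i w) m ≤ 0 := by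
        intro i
        set e : Spc n := EuclideanSpace.single i (1:ℝ) with he
        set γ : ℝ → Spc n × ℝ := fun h => ((m.1 + h • e : Spc n), m.2) with hγ
        have hγd : ∀ h : ℝ, HasDerivAt γ ((e, 0) : Spc n × ℝ) h := by
          intro h
          have hx : HasDerivAt (fun h : ℝ => (m.1 + h • e : Spc n)) e h := by
            simpa using ((hasDerivAt_id h).smul_const e).const_add m.1
          exact HasDerivAt.prodMk hx (hasDerivAt_const h m.2)
        have hγ0 : γ 0 = m := by simp [hγ]
        have hgd : ∀ h : ℝ, HasDerivAt (fun h => w (γ h)) (pd i w (γ h)) h := by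
          intro h
          exact (hasFDerivAt' hw (γ h)).comp_hasDerivAt h (hγd h)
        have hgd2 : HasDerivAt (fun h => pd i w (γ h)) (pd i (pd i w) m) 0 := by
          have := (hasFDerivAt' (contDiff_Dv (ev n i) hw) (γ 0)).comp_hasDerivAt 0 (hγd 0)
          rwa [hγ0] at this
        have hloc : IsLocalMax (fun h => w (γ h)) 0 := by
          have hδ : 0 < R - ‖m.1 - x₀‖ := by linarith
          filter_upwards [Metric.ball_mem_nhds (0:ℝ) hδ] with h hh
          have hnorm : ‖(m.1 + h • e : Spc n) - x₀‖ ≤ R := by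
            have h1 : ‖(m.1 + h • e : Spc n) - x₀‖ ≤ ‖m.1 - x₀‖ + ‖h • e‖ := by
              have : (m.1 + h • e : Spc n) - x₀ = (m.1 - x₀) + h • e := by abel
              rw [this]; exact norm_add_le _ _
            have h2 : ‖h • e‖ = |h| := by
              rw [norm_smul, he, EuclideanSpace.norm_single]
              simp [Real.norm_eq_abs]
            have h3 : |h| < R - ‖m.1 - x₀‖ := by
              simpa [Real.dist_eq] using hh
            linarith
          have hK' : γ h ∈ K := (hmemK _).2 ⟨hnorm, hm2⟩
          have h2 : wε (γ h) ≤ wε m := hm hK'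
          show w (γ h) ≤ w (γ 0)
          rw [hγ0]
          simp only [hwε, hγ] at h2
          linarith
        exact secondDeriv_nonpos hgd hgd2 hloc
      have hsum : ∑ i, pd i (pd i w) m ≤ 0 :=
        Finset.sum_nonpos fun i _ => hspace i
      have := hineq m hm1 hm2
      linarith
  -- conclude by letting ε → 0
  intro q hq1 hq2
  refine le_of_forall_pos_le_add fun ε' hε' => ?_
  have h := main (ε' / R ^ 2) (by positivity) q ((hmemK q).2 ⟨hq1, hq2⟩)
  calc w q ≤ b + ε' / R ^ 2 * R ^ 2 := h
    _ = b + ε' := by field_simp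

end Liouville
namespace Liouville

variable {n : ℕ}

def Caloric (v : Spc n × ℝ → ℝ) : Prop := ∀ p, pt v p = ∑ i, pd i (pd i v) p

theorem caloric_pd {v : Spc n × ℝ → ℝ} (hv : ContDiff ℝ (⊤ : ℕ∞) v) (hcal : Caloric v) (i : Fin n) :
    Caloric (pd i v) := by
  intro p
  have h1 : pt (pd i v) p = pd i (pt v) p := Dv_comm _ _ hv p
  have h2 : pt v = fun q => ∑ j, pd j (pd j v) q := funext fun q => hcal q
  rw [h1, h2]
  have h3 : Dv (ev n i) (fun q => ∑ j, pd j (pd j v) q) p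
      = ∑ j, Dv (ev n i) (pd j (pd j v)) p :=
    Dv_sum _ _ (fun j => contDiff_Dv _ (contDiff_Dv _ hv)) p
  show Dv (ev n i) (fun q => ∑ j, pd j (pd j v) q) p = _
  rw [h3]
  refine Finset.sum_congr rfl fun j _ => ?_
  show Dv (ev n i) (Dv (ev n j) (pd j v)) p = Dv (ev n j) (Dv (ev n j) (pd i v)) p
  rw [Dv_comm _ _ (show ContDiff ℝ (⊤ : ℕ∞) (pd j v) from contDiff_Dv _ hv) p]
  have h4 : Dv (ev n i) (pd j v) = Dv (ev n j) (pd i v) :=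
    funext fun q => Dv_comm _ _ hv q
  rw [h4]

end Liouville
namespace Liouville

variable {n : ℕ}

/-! ### auxiliary functions for the Bernstein argument -/

def sF (x₀ : Spc n) (j : Fin n) : Spc n × ℝ → ℝ := fun q => q.1 j - x₀ j

def psiF (x₀ : Spc n) (R : ℝ) : Spc n × ℝ → ℝ :=
  fun q => R^2 - ∑ j, sF x₀ j q * sF x₀ j q

def aF (t₀ R : ℝ) : Spc n × ℝ → ℝ := fun q => q.2 - t₀ + R^2

def GF (v : Spc n × ℝ → ℝ) : Spc n × ℝ → ℝ := fun q => ∑ j, pd j v q * pd j v q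

def PF (v : Spc n × ℝ → ℝ) (k : Fin n) : Spc n × ℝ → ℝ :=
  fun q => ∑ i, 2 * pd i v q * pd k (pd i v) q

section aux

variable (x₀ : Spc n) (t₀ R : ℝ)

theorem hasFDerivAt_sF (j : Fin n) (q : Spc n × ℝ) :
    HasFDerivAt (sF x₀ j)
      ((EuclideanSpace.proj j).comp (ContinuousLinearMap.fst ℝ (Spc n) ℝ)) q :=
  (((EuclideanSpace.proj (𝕜 := ℝ) j).comp
    (ContinuousLinearMap.fst ℝ (Spc n) ℝ)).hasFDerivAt (x := q)).sub_const (x₀ j)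

theorem contDiff_sF (j : Fin n) : ContDiff ℝ (⊤ : ℕ∞) (sF x₀ j) :=
  (((EuclideanSpace.proj (𝕜 := ℝ) j).comp
    (ContinuousLinearMap.fst ℝ (Spc n) ℝ)).contDiff).sub contDiff_const

theorem Dv_sF (j : Fin n) (d : Spc n × ℝ) (q : Spc n × ℝ) :
    Dv d (sF x₀ j) q = d.1 j := by
  show fderiv ℝ (sF x₀ j) q d = d.1 j
  rw [(hasFDerivAt_sF x₀ j q).fderiv]
  simp

theorem contDiff_psiF : ContDiff ℝ (⊤ : ℕ∞) (psiF x₀ R) :=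
  contDiff_const.sub (ContDiff.sum fun j _ => (contDiff_sF x₀ j).mul (contDiff_sF x₀ j))

theorem Dv_psiF (d : Spc n × ℝ) (q : Spc n × ℝ) :
    Dv d (psiF x₀ R) q = -(∑ j, 2 * sF x₀ j q * d.1 j) := by
  have h1 : Dv d (psiF x₀ R) q
      = Dv d (fun _ => R^2) q - Dv d (fun q' => ∑ j, sF x₀ j q' * sF x₀ j q') q :=
    Dv_sub d contDiff_const (ContDiff.sum fun j _ => (contDiff_sF x₀ j).mul (contDiff_sF x₀ j)) q
  rw [h1, Dv_const, Dv_sum d Finset.univ (fun j => (contDiff_sF x₀ j).mul (contDiff_sF x₀ j)) q]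
  rw [zero_sub, neg_inj]
  refine Finset.sum_congr rfl fun j _ => ?_
  rw [Dv_mul d (contDiff_sF x₀ j) (contDiff_sF x₀ j) q, Dv_sF]
  ring

theorem pd_psiF (k : Fin n) (q : Spc n × ℝ) :
    pd k (psiF x₀ R) q = -(2 * sF x₀ k q) := by
  show Dv (ev n k) (psiF x₀ R) q = _
  rw [Dv_psiF]
  have : ∀ j : Fin n, (ev n k).1 j = if j = k then (1:ℝ) else 0 := by
    intro j; simp [ev, EuclideanSpace.single_apply]
  rw [neg_inj.symm.mp rfl]
  congr 1
  rw [Finset.sum_congr rfl fun j _ => by rw [this j]]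
  simp [mul_ite]

theorem pt_psiF (q : Spc n × ℝ) : pt (psiF x₀ R) q = 0 := by
  show Dv ((0 : Spc n), (1:ℝ)) (psiF x₀ R) q = 0
  rw [Dv_psiF]
  simp

theorem hasFDerivAt_aF (q : Spc n × ℝ) :
    HasFDerivAt (aF t₀ R) (ContinuousLinearMap.snd ℝ (Spc n) ℝ) q :=
  (((ContinuousLinearMap.snd ℝ (Spc n) ℝ).hasFDerivAt (x := q)).sub_const t₀).add_const (R^2)

theorem contDiff_aF : ContDiff ℝ (⊤ : ℕ∞) (aF (n := n) t₀ R) :=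
  (((ContinuousLinearMap.snd ℝ (Spc n) ℝ).contDiff).sub contDiff_const).add contDiff_const

theorem Dv_aF (d : Spc n × ℝ) (q : Spc n × ℝ) : Dv d (aF t₀ R) q = d.2 := by
  show fderiv ℝ (aF t₀ R) q d = d.2
  rw [(hasFDerivAt_aF t₀ R q).fderiv]
  rfl

theorem pd_aF (k : Fin n) (q : Spc n × ℝ) : pd k (aF t₀ R) q = 0 := by
  show Dv (ev n k) (aF t₀ R) q = 0; rw [Dv_aF]; rfl

theorem pt_aF (q : Spc n × ℝ) : pt (aF t₀ R) q = 1 := by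
  show Dv ((0:Spc n),(1:ℝ)) (aF t₀ R) q = 1; rw [Dv_aF]

variable {v : Spc n × ℝ → ℝ} (hv : ContDiff ℝ (⊤ : ℕ∞) v)

include hv

theorem contDiff_GF : ContDiff ℝ (⊤ : ℕ∞) (GF v) :=
  ContDiff.sum fun j _ => (contDiff_Dv _ hv).mul (contDiff_Dv _ hv)

theorem Dv_GF (d : Spc n × ℝ) (q : Spc n × ℝ) :
    Dv d (GF v) q = ∑ j, 2 * pd j v q * Dv d (pd j v) q := by
  have h1 : Dv d (GF v) q = ∑ j, Dv d (fun q' => pd j v q' * pd j v q') q :=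
    Dv_sum d Finset.univ (fun j => (contDiff_Dv _ hv).mul (contDiff_Dv _ hv)) q
  rw [h1]
  refine Finset.sum_congr rfl fun j _ => ?_
  rw [Dv_mul d (show ContDiff ℝ (⊤ : ℕ∞) (pd j v) from contDiff_Dv _ hv)
    (show ContDiff ℝ (⊤ : ℕ∞) (pd j v) from contDiff_Dv _ hv) q]
  ring

theorem pd_GF (k : Fin n) (q : Spc n × ℝ) : pd k (GF v) q = PF v k q :=
  Dv_GF hv (ev n k) q

theorem pt_GF (q : Spc n × ℝ) : pt (GF v) q = ∑ j, 2 * pd j v q * pt (pd j v) q :=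
  Dv_GF hv ((0:Spc n),(1:ℝ)) q

theorem contDiff_PF (k : Fin n) : ContDiff ℝ (⊤ : ℕ∞) (PF v k) :=
  ContDiff.sum fun i _ => (contDiff_const.mul (contDiff_Dv _ hv)).mul
    (contDiff_Dv _ (contDiff_Dv _ hv))

theorem pd_PF (k : Fin n) (q : Spc n × ℝ) :
    pd k (PF v k) q = ∑ i, 2 * (pd k (pd i v) q * pd k (pd i v) q
      + pd i v q * pd k (pd k (pd i v)) q) := by
  have h1 : pd k (PF v k) q
      = ∑ i, Dv (ev n k) (fun q' => 2 * pd i v q' * pd k (pd i v) q') q :=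
    Dv_sum _ Finset.univ (fun i => (contDiff_const.mul (contDiff_Dv _ hv)).mul
      (contDiff_Dv _ (contDiff_Dv _ hv))) q
  rw [h1]
  refine Finset.sum_congr rfl fun i _ => ?_
  rw [Dv_mul _ (show ContDiff ℝ (⊤ : ℕ∞) (fun q' => 2 * pd i v q') from contDiff_const.mul (contDiff_Dv _ hv))
    (show ContDiff ℝ (⊤ : ℕ∞) (pd k (pd i v)) from contDiff_Dv _ (contDiff_Dv _ hv)) q,
    Dv_const_mul _ (show ContDiff ℝ (⊤ : ℕ∞) (pd i v) from contDiff_Dv _ hv)]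
  have e1 : Dv (ev n k) (pd i v) q = pd k (pd i v) q := rfl
  have e2 : Dv (ev n k) (pd k (pd i v)) q = pd k (pd k (pd i v)) q := rfl
  rw [e1, e2]
  ring

end aux

end Liouville
namespace Liouville

variable {n : ℕ}

def wF (v : Spc n × ℝ → ℝ) (x₀ : Spc n) (t₀ R lam : ℝ) : Spc n × ℝ → ℝ :=
  fun q => aF t₀ R q * (psiF x₀ R q * psiF x₀ R q) * GF v q
    + lam * (R^2*R^2) * (v q * v q)

section wlem

variable {v : Spc n × ℝ → ℝ} (hv : ContDiff ℝ (⊤ : ℕ∞) v) (x₀ : Spc n) (t₀ R lam : ℝ)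

include hv

theorem contDiff_wF : ContDiff ℝ (⊤ : ℕ∞) (wF v x₀ t₀ R lam) :=
  (((contDiff_aF t₀ R).mul ((contDiff_psiF x₀ R).mul (contDiff_psiF x₀ R))).mul
    (contDiff_GF hv)).add (contDiff_const.mul (hv.mul hv))

theorem pd_wF (k : Fin n) (q : Spc n × ℝ) :
    pd k (wF v x₀ t₀ R lam) q =
      -4 * (aF t₀ R q * psiF x₀ R q * sF x₀ k q * GF v q)
      + aF t₀ R q * (psiF x₀ R q * psiF x₀ R q) * PF v k q
      + lam * (R^2*R^2) * (2 * v q * pd k v q) := by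
  have hA := contDiff_aF (n := n) t₀ R
  have hΨ := contDiff_psiF x₀ R
  have hG := contDiff_GF hv
  have h1 : pd k (wF v x₀ t₀ R lam) q
      = Dv (ev n k) (fun q' => aF t₀ R q' * (psiF x₀ R q' * psiF x₀ R q') * GF v q') q
      + Dv (ev n k) (fun q' => lam * (R^2*R^2) * (v q' * v q')) q :=
    Dv_add _ ((hA.mul (hΨ.mul hΨ)).mul hG) (contDiff_const.mul (hv.mul hv)) q
  have h2 : Dv (ev n k) (fun q' => aF t₀ R q' * (psiF x₀ R q' * psiF x₀ R q') * GF v q') q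
      = Dv (ev n k) (fun q' => aF t₀ R q' * (psiF x₀ R q' * psiF x₀ R q')) q * GF v q
        + (aF t₀ R q * (psiF x₀ R q * psiF x₀ R q)) * Dv (ev n k) (GF v) q :=
    Dv_mul _ (hA.mul (hΨ.mul hΨ)) hG q
  have h3 : Dv (ev n k) (fun q' => aF t₀ R q' * (psiF x₀ R q' * psiF x₀ R q')) q
      = Dv (ev n k) (aF t₀ R) q * (psiF x₀ R q * psiF x₀ R q)
        + aF t₀ R q * Dv (ev n k) (fun q' => psiF x₀ R q' * psiF x₀ R q') q :=
    Dv_mul _ hA (hΨ.mul hΨ) q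
  have h4 : Dv (ev n k) (fun q' => psiF x₀ R q' * psiF x₀ R q') q
      = Dv (ev n k) (psiF x₀ R) q * psiF x₀ R q + psiF x₀ R q * Dv (ev n k) (psiF x₀ R) q :=
    Dv_mul _ hΨ hΨ q
  have h5 : Dv (ev n k) (fun q' => lam * (R^2*R^2) * (v q' * v q')) q
      = lam * (R^2*R^2) * Dv (ev n k) (fun q' => v q' * v q') q :=
    Dv_const_mul _ (hv.mul hv) _ q
  have h6 : Dv (ev n k) (fun q' => v q' * v q') q
      = Dv (ev n k) v q * v q + v q * Dv (ev n k) v q := Dv_mul _ hv hv q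
  have e1 : Dv (ev n k) (aF t₀ R) q = 0 := pd_aF t₀ R k q
  have e2 : Dv (ev n k) (psiF x₀ R) q = -(2 * sF x₀ k q) := pd_psiF x₀ R k q
  have e3 : Dv (ev n k) (GF v) q = PF v k q := pd_GF hv k q
  have e4 : Dv (ev n k) v q = pd k v q := rfl
  rw [h1, h2, h3, h4, h5, h6, e1, e2, e3, e4]
  ring

theorem pt_wF (q : Spc n × ℝ) :
    pt (wF v x₀ t₀ R lam) q =
      psiF x₀ R q * psiF x₀ R q * GF v q
      + aF t₀ R q * (psiF x₀ R q * psiF x₀ R q) * (∑ j, 2 * pd j v q * pt (pd j v) q)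
      + lam * (R^2*R^2) * (2 * v q * pt v q) := by
  have hA := contDiff_aF (n := n) t₀ R
  have hΨ := contDiff_psiF x₀ R
  have hG := contDiff_GF hv
  set d : Spc n × ℝ := ((0:Spc n), (1:ℝ)) with hd
  have h1 : pt (wF v x₀ t₀ R lam) q
      = Dv d (fun q' => aF t₀ R q' * (psiF x₀ R q' * psiF x₀ R q') * GF v q') q
      + Dv d (fun q' => lam * (R^2*R^2) * (v q' * v q')) q :=
    Dv_add _ ((hA.mul (hΨ.mul hΨ)).mul hG) (contDiff_const.mul (hv.mul hv)) q
  have h2 : Dv d (fun q' => aF t₀ R q' * (psiF x₀ R q' * psiF x₀ R q') * GF v q') q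
      = Dv d (fun q' => aF t₀ R q' * (psiF x₀ R q' * psiF x₀ R q')) q * GF v q
        + (aF t₀ R q * (psiF x₀ R q * psiF x₀ R q)) * Dv d (GF v) q :=
    Dv_mul _ (hA.mul (hΨ.mul hΨ)) hG q
  have h3 : Dv d (fun q' => aF t₀ R q' * (psiF x₀ R q' * psiF x₀ R q')) q
      = Dv d (aF t₀ R) q * (psiF x₀ R q * psiF x₀ R q)
        + aF t₀ R q * Dv d (fun q' => psiF x₀ R q' * psiF x₀ R q') q :=
    Dv_mul _ hA (hΨ.mul hΨ) q
  have h4 : Dv d (fun q' => psiF x₀ R q' * psiF x₀ R q') q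
      = Dv d (psiF x₀ R) q * psiF x₀ R q + psiF x₀ R q * Dv d (psiF x₀ R) q :=
    Dv_mul _ hΨ hΨ q
  have h5 : Dv d (fun q' => lam * (R^2*R^2) * (v q' * v q')) q
      = lam * (R^2*R^2) * Dv d (fun q' => v q' * v q') q :=
    Dv_const_mul _ (hv.mul hv) _ q
  have h6 : Dv d (fun q' => v q' * v q') q = Dv d v q * v q + v q * Dv d v q := Dv_mul _ hv hv q
  have e1 : Dv d (aF t₀ R) q = 1 := pt_aF t₀ R q
  have e2 : Dv d (psiF x₀ R) q = 0 := pt_psiF x₀ R q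
  have e3 : Dv d (GF v) q = ∑ j, 2 * pd j v q * pt (pd j v) q := pt_GF hv q
  have e4 : Dv d v q = pt v q := rfl
  rw [h1, h2, h3, h4, h5, h6, e1, e2, e3, e4]
  ring

theorem pd_pd_wF (k : Fin n) (q : Spc n × ℝ) :
    pd k (pd k (wF v x₀ t₀ R lam)) q =
      -4 * ((aF t₀ R q * psiF x₀ R q - 2 * aF t₀ R q * sF x₀ k q * sF x₀ k q) * GF v q
            + aF t₀ R q * psiF x₀ R q * sF x₀ k q * PF v k q)
      + (-4 * (aF t₀ R q * sF x₀ k q * psiF x₀ R q * PF v k q)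
         + aF t₀ R q * (psiF x₀ R q * psiF x₀ R q)
           * (∑ i, 2 * (pd k (pd i v) q * pd k (pd i v) q
                + pd i v q * pd k (pd k (pd i v)) q)))
      + lam * (R^2*R^2) * (2 * (pd k v q * pd k v q + v q * pd k (pd k v) q)) := by
  have hA := contDiff_aF (n := n) t₀ R
  have hΨ := contDiff_psiF x₀ R
  have hS := contDiff_sF x₀ k
  have hG := contDiff_GF hv
  have hP := contDiff_PF hv k
  have hb : ContDiff ℝ (⊤ : ℕ∞) (pd k v) := contDiff_Dv _ hv
  have hw1 : pd k (wF v x₀ t₀ R lam)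
      = fun q' => -4 * (aF t₀ R q' * psiF x₀ R q' * sF x₀ k q' * GF v q')
        + aF t₀ R q' * (psiF x₀ R q' * psiF x₀ R q') * PF v k q'
        + lam * (R^2*R^2) * (2 * v q' * pd k v q') :=
    funext fun q' => pd_wF hv x₀ t₀ R lam k q'
  rw [hw1]
  have c1 : ContDiff ℝ (⊤ : ℕ∞) (fun q' : Spc n × ℝ =>
      -4 * (aF t₀ R q' * psiF x₀ R q' * sF x₀ k q' * GF v q')) :=
    contDiff_const.mul ((((hA.mul hΨ).mul hS).mul hG))
  have c2 : ContDiff ℝ (⊤ : ℕ∞) (fun q' : Spc n × ℝ =>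
      aF t₀ R q' * (psiF x₀ R q' * psiF x₀ R q') * PF v k q') :=
    (hA.mul (hΨ.mul hΨ)).mul hP
  have c3 : ContDiff ℝ (⊤ : ℕ∞) (fun q' : Spc n × ℝ =>
      lam * (R^2*R^2) * (2 * v q' * pd k v q')) :=
    contDiff_const.mul ((contDiff_const.mul hv).mul hb)
  have h1 : pd k (fun q' =>
        -4 * (aF t₀ R q' * psiF x₀ R q' * sF x₀ k q' * GF v q')
        + aF t₀ R q' * (psiF x₀ R q' * psiF x₀ R q') * PF v k q'
        + lam * (R^2*R^2) * (2 * v q' * pd k v q')) q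
      = Dv (ev n k) (fun q' =>
          -4 * (aF t₀ R q' * psiF x₀ R q' * sF x₀ k q' * GF v q')
          + aF t₀ R q' * (psiF x₀ R q' * psiF x₀ R q') * PF v k q') q
        + Dv (ev n k) (fun q' => lam * (R^2*R^2) * (2 * v q' * pd k v q')) q :=
    Dv_add _ (c1.add c2) c3 q
  have h2 : Dv (ev n k) (fun q' =>
        -4 * (aF t₀ R q' * psiF x₀ R q' * sF x₀ k q' * GF v q')
        + aF t₀ R q' * (psiF x₀ R q' * psiF x₀ R q') * PF v k q') q
      = Dv (ev n k) (fun q' => -4 * (aF t₀ R q' * psiF x₀ R q' * sF x₀ k q' * GF v q')) q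
        + Dv (ev n k) (fun q' => aF t₀ R q' * (psiF x₀ R q' * psiF x₀ R q') * PF v k q') q :=
    Dv_add _ c1 c2 q
  -- first addend
  have h3 : Dv (ev n k) (fun q' => -4 * (aF t₀ R q' * psiF x₀ R q' * sF x₀ k q' * GF v q')) q
      = -4 * Dv (ev n k) (fun q' => aF t₀ R q' * psiF x₀ R q' * sF x₀ k q' * GF v q') q :=
    Dv_const_mul _ (((hA.mul hΨ).mul hS).mul hG) _ q
  have h4 : Dv (ev n k) (fun q' => aF t₀ R q' * psiF x₀ R q' * sF x₀ k q' * GF v q') q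
      = Dv (ev n k) (fun q' => aF t₀ R q' * psiF x₀ R q' * sF x₀ k q') q * GF v q
        + aF t₀ R q * psiF x₀ R q * sF x₀ k q * Dv (ev n k) (GF v) q :=
    Dv_mul _ ((hA.mul hΨ).mul hS) hG q
  have h5 : Dv (ev n k) (fun q' => aF t₀ R q' * psiF x₀ R q' * sF x₀ k q') q
      = Dv (ev n k) (fun q' => aF t₀ R q' * psiF x₀ R q') q * sF x₀ k q
        + aF t₀ R q * psiF x₀ R q * Dv (ev n k) (sF x₀ k) q :=
    Dv_mul _ (hA.mul hΨ) hS q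
  have h6 : Dv (ev n k) (fun q' => aF t₀ R q' * psiF x₀ R q') q
      = Dv (ev n k) (aF t₀ R) q * psiF x₀ R q + aF t₀ R q * Dv (ev n k) (psiF x₀ R) q :=
    Dv_mul _ hA hΨ q
  -- second addend
  have h7 : Dv (ev n k) (fun q' => aF t₀ R q' * (psiF x₀ R q' * psiF x₀ R q') * PF v k q') q
      = Dv (ev n k) (fun q' => aF t₀ R q' * (psiF x₀ R q' * psiF x₀ R q')) q * PF v k q
        + aF t₀ R q * (psiF x₀ R q * psiF x₀ R q) * Dv (ev n k) (PF v k) q :=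
    Dv_mul _ (hA.mul (hΨ.mul hΨ)) hP q
  have h8 : Dv (ev n k) (fun q' => aF t₀ R q' * (psiF x₀ R q' * psiF x₀ R q')) q
      = Dv (ev n k) (aF t₀ R) q * (psiF x₀ R q * psiF x₀ R q)
        + aF t₀ R q * Dv (ev n k) (fun q' => psiF x₀ R q' * psiF x₀ R q') q :=
    Dv_mul _ hA (hΨ.mul hΨ) q
  have h9 : Dv (ev n k) (fun q' => psiF x₀ R q' * psiF x₀ R q') q
      = Dv (ev n k) (psiF x₀ R) q * psiF x₀ R q + psiF x₀ R q * Dv (ev n k) (psiF x₀ R) q :=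
    Dv_mul _ hΨ hΨ q
  -- third addend
  have h10 : Dv (ev n k) (fun q' => lam * (R^2*R^2) * (2 * v q' * pd k v q')) q
      = lam * (R^2*R^2) * Dv (ev n k) (fun q' => 2 * v q' * pd k v q') q :=
    Dv_const_mul _ ((contDiff_const.mul hv).mul hb) _ q
  have h11 : Dv (ev n k) (fun q' => 2 * v q' * pd k v q') q
      = Dv (ev n k) (fun q' => 2 * v q') q * pd k v q + 2 * v q * Dv (ev n k) (pd k v) q :=
    Dv_mul _ (contDiff_const.mul hv) hb q
  have h12 : Dv (ev n k) (fun q' => 2 * v q') q = 2 * Dv (ev n k) v q :=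
    Dv_const_mul _ hv _ q
  have e1 : Dv (ev n k) (aF t₀ R) q = 0 := pd_aF t₀ R k q
  have e2 : Dv (ev n k) (psiF x₀ R) q = -(2 * sF x₀ k q) := pd_psiF x₀ R k q
  have e3 : Dv (ev n k) (GF v) q = PF v k q := pd_GF hv k q
  have e4 : Dv (ev n k) v q = pd k v q := rfl
  have e5 : Dv (ev n k) (sF x₀ k) q = 1 := by
    rw [Dv_sF x₀ k (ev n k) q]; simp [ev, EuclideanSpace.single_apply]
  have e6 : Dv (ev n k) (PF v k) q
      = ∑ i, 2 * (pd k (pd i v) q * pd k (pd i v) q + pd i v q * pd k (pd k (pd i v)) q) :=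
    pd_PF hv k q
  have e7 : Dv (ev n k) (pd k v) q = pd k (pd k v) q := rfl
  rw [h1, h2, h3, h4, h5, h6, h7, h8, h9, h10, h11, h12, e1, e2, e3, e4, e5, e6, e7]
  ring

end wlem

end Liouville
namespace Liouville

variable {n : ℕ}

theorem sum_sF_sq (x₀ : Spc n) (q : Spc n × ℝ) :
    ∑ j, sF x₀ j q * sF x₀ j q = ‖q.1 - x₀‖^2 := by
  rw [EuclideanSpace.norm_eq, Real.sq_sqrt (Finset.sum_nonneg fun j _ => sq_nonneg _)]
  refine Finset.sum_congr rfl fun j _ => ?_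
  have : (q.1 - x₀) j = q.1 j - x₀ j := rfl
  rw [this]
  simp [sF, Real.norm_eq_abs, sq, abs_mul_abs_self]

theorem key_ineq {Ψ H Y Gv T : ℝ} (hΨ0 : 0 ≤ Ψ) (hH : 0 ≤ H) (hY : 0 ≤ Y) (hG : 0 ≤ Gv)
    (hCS : T^2 ≤ Y * Gv * H) : 16*Ψ*T ≤ 2*Ψ^2*H + 32*Y*Gv := by
  have hP : 0 ≤ 2*Ψ^2*H + 32*Y*Gv := by positivity
  rcases le_or_gt (16*Ψ*T) 0 with h | h
  · linarith
  · have h256 := mul_le_mul_of_nonneg_left hCS (by positivity : (0:ℝ) ≤ 256*Ψ^2)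
    have hb2 : (16*Ψ*T)^2 ≤ (2*Ψ^2*H + 32*Y*Gv)^2 := by
      nlinarith [sq_nonneg (2*Ψ^2*H - 32*Y*Gv)]
    nlinarith [hb2, hP, h]

theorem bernstein {v : Spc n × ℝ → ℝ} (hv : ContDiff ℝ (⊤ : ℕ∞) v) (hcal : Caloric v)
    (x₀ : Spc n) (t₀ R M : ℝ) (hR : 0 < R)
    (hM : ∀ q : Spc n × ℝ, ‖q.1 - x₀‖ ≤ R → q.2 ∈ Set.Icc (t₀ - R^2) t₀ → |v q| ≤ M)
    (i₀ : Fin n) :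
    R^2 * (pd i₀ v (x₀, t₀))^2 ≤ (4*(n:ℝ)+33) * M^2 := by
  set lam : ℝ := 4*(n:ℝ)+33 with hlam
  have hlam0 : (0:ℝ) ≤ lam := by positivity
  have hR2 : (0:ℝ) < R^2 := by positivity
  have hcmem : (t₀ : ℝ) ∈ Set.Icc (t₀ - R^2) t₀ := Set.mem_Icc.2 ⟨by linarith, le_rfl⟩
  have hcen1 : ‖((x₀, t₀) : Spc n × ℝ).1 - x₀‖ ≤ R := by
    rw [show ((x₀, t₀) : Spc n × ℝ).1 - x₀ = 0 from sub_self x₀, norm_zero]; exact hR.le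
  have hM0 : 0 ≤ M := le_trans (abs_nonneg _) (hM (x₀, t₀) hcen1 hcmem)
  set w : Spc n × ℝ → ℝ := wF v x₀ t₀ R lam with hwdef
  -- differential inequality
  have hineq : ∀ p : Spc n × ℝ, ‖p.1 - x₀‖ ≤ R → p.2 ∈ Set.Icc (t₀ - R^2) t₀ →
      pt w p ≤ ∑ k, pd k (pd k w) p := by
    intro p hp1 hp2
    set A := aF t₀ R p with hA
    set Ψ := psiF x₀ R p with hΨ
    set V := v p with hV
    set Gv := GF v p with hGv
    set Y := ∑ k, sF x₀ k p * sF x₀ k p with hY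
    set SP := ∑ k, sF x₀ k p * PF v k p with hSP
    set H := ∑ k, ∑ i, pd k (pd i v) p * pd k (pd i v) p with hH
    set U := ∑ k, ∑ i, pd i v p * pd k (pd k (pd i v)) p with hU
    set CC := ∑ k, pd k (pd k v) p with hCC
    -- E2 : the laplacian
    have step1 : ∀ k : Fin n, pd k (pd k w) p
        = (-4*A*Ψ*Gv)
          + (8*A*Gv)*(sF x₀ k p * sF x₀ k p)
          + (-8*A*Ψ)*(sF x₀ k p * PF v k p)
          + (2*A*Ψ*Ψ)*(∑ i, pd k (pd i v) p * pd k (pd i v) p)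
          + (2*A*Ψ*Ψ)*(∑ i, pd i v p * pd k (pd k (pd i v)) p)
          + (2*lam*(R^2*R^2))*(pd k v p * pd k v p)
          + ((2*lam*(R^2*R^2))*V)*(pd k (pd k v) p) := by
      intro k
      rw [hwdef, pd_pd_wF hv x₀ t₀ R lam k p]
      have hsplit : ∑ i, 2 * (pd k (pd i v) p * pd k (pd i v) p
            + pd i v p * pd k (pd k (pd i v)) p)
          = 2*(∑ i, pd k (pd i v) p * pd k (pd i v) p)
            + 2*(∑ i, pd i v p * pd k (pd k (pd i v)) p) := by
        simp only [mul_add, Finset.sum_add_distrib, ← Finset.mul_sum]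
      rw [hsplit]
      ring
    have E2 : ∑ k, pd k (pd k w) p
        = (n:ℝ)*(-4*A*Ψ*Gv) + (8*A*Gv)*Y + (-8*A*Ψ)*SP + (2*A*Ψ*Ψ)*H + (2*A*Ψ*Ψ)*U
          + (2*lam*(R^2*R^2))*Gv + ((2*lam*(R^2*R^2))*V)*CC := by
      rw [Finset.sum_congr rfl fun k _ => step1 k]
      rw [Finset.sum_add_distrib, Finset.sum_add_distrib, Finset.sum_add_distrib,
        Finset.sum_add_distrib, Finset.sum_add_distrib, Finset.sum_add_distrib]
      rw [Finset.sum_const, Finset.card_univ, Fintype.card_fin, nsmul_eq_mul]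
      rw [← Finset.mul_sum, ← Finset.mul_sum, ← Finset.mul_sum, ← Finset.mul_sum,
        ← Finset.mul_sum, ← Finset.mul_sum]
      have hGF : (∑ i : Fin n, pd i v p * pd i v p) = Gv := hGv.symm
      rw [hGF]
    -- E1 : the time derivative
    have hcalb : ∀ j : Fin n, pt (pd j v) p = ∑ k, pd k (pd k (pd j v)) p :=
      fun j => caloric_pd hv hcal j p
    have E1 : pt w p = Ψ*Ψ*Gv + (2*A*Ψ*Ψ)*U + ((2*lam*(R^2*R^2))*V)*CC := by
      rw [hwdef, pt_wF hv x₀ t₀ R lam p]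
      have h2 : ∀ j : Fin n, 2 * pd j v p * pt (pd j v) p
          = ∑ k, 2 * (pd j v p * pd k (pd k (pd j v)) p) := by
        intro j
        rw [hcalb j, Finset.mul_sum]
        exact Finset.sum_congr rfl fun k _ => by ring
      have h1 : ∑ j, 2 * pd j v p * pt (pd j v) p = 2 * U := by
        rw [Finset.sum_congr rfl fun j _ => h2 j, Finset.sum_comm]
        simp only [← Finset.mul_sum]
        rfl
      have h3 : pt v p = CC := hcal p
      rw [h1, h3]
      ring
    -- bounds
    have hA0 : 0 ≤ A := by rw [hA]; show (0:ℝ) ≤ p.2 - t₀ + R^2; have := hp2.1; nlinarith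
    have hA1 : A ≤ R^2 := by rw [hA]; show p.2 - t₀ + R^2 ≤ R^2; have := hp2.2; nlinarith
    have hYval : Y = ‖p.1 - x₀‖^2 := sum_sF_sq x₀ p
    have hY0 : 0 ≤ Y := hYval ▸ sq_nonneg _
    have hY1 : Y ≤ R^2 := by rw [hYval]; nlinarith [norm_nonneg (p.1 - x₀)]
    have hΨval : Ψ = R^2 - Y := rfl
    have hΨ0 : 0 ≤ Ψ := by rw [hΨval]; linarith
    have hΨ1 : Ψ ≤ R^2 := by rw [hΨval]; linarith
    have hG0 : 0 ≤ Gv := Finset.sum_nonneg fun j _ => mul_self_nonneg _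
    have hH0 : 0 ≤ H :=
      Finset.sum_nonneg fun k _ => Finset.sum_nonneg fun i _ => mul_self_nonneg _
    -- Cauchy-Schwarz for the cross term
    set T := ∑ k, ∑ i, (sF x₀ k p * pd i v p) * pd k (pd i v) p with hT
    have hSPval : SP = 2 * T := by
      rw [hSP, hT, Finset.mul_sum]
      refine Finset.sum_congr rfl fun k _ => ?_
      show sF x₀ k p * PF v k p = _
      rw [PF, Finset.mul_sum, Finset.mul_sum]
      exact Finset.sum_congr rfl fun i _ => by ring
    have hCS : T^2 ≤ Y * Gv * H := by
      have h1 := Finset.sum_mul_sq_le_sq_mul_sq (Finset.univ ×ˢ Finset.univ)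
        (fun z : Fin n × Fin n => sF x₀ z.1 p * pd z.2 v p)
        (fun z : Fin n × Fin n => pd z.1 (pd z.2 v) p)
      have e1 : ∑ z ∈ Finset.univ ×ˢ Finset.univ,
          (sF x₀ z.1 p * pd z.2 v p) * pd z.1 (pd z.2 v) p = T := by
        rw [Finset.sum_product, hT]
      have e2 : ∑ z ∈ Finset.univ ×ˢ Finset.univ,
          (sF x₀ z.1 p * pd z.2 v p)^2 = Y * Gv := by
        rw [Finset.sum_product, hY, hGv,
          show GF v p = ∑ j, pd j v p * pd j v p from rfl, Finset.sum_mul_sum]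
        exact Finset.sum_congr rfl fun k _ => Finset.sum_congr rfl fun i _ => by ring
      have e3 : ∑ z ∈ Finset.univ ×ˢ Finset.univ,
          (pd z.1 (pd z.2 v) p)^2 = H := by
        rw [Finset.sum_product, hH]
        exact Finset.sum_congr rfl fun k _ => Finset.sum_congr rfl fun i _ => by ring
      rw [e1, e2, e3] at h1
      exact h1
    have hkey : 16*Ψ*T ≤ 2*Ψ^2*H + 32*Y*Gv := key_ineq hΨ0 hH0 hY0 hG0 hCS
    have hAkey := mul_le_mul_of_nonneg_left hkey hA0
    -- combine
    rw [E1, E2, hSPval]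
    have hn0 : (0:ℝ) ≤ (n:ℝ) := Nat.cast_nonneg n
    have f1 : A*Ψ ≤ R^2*R^2 := mul_le_mul hA1 hΨ1 hΨ0 (sq_nonneg R)
    have f2 : A*Y ≤ R^2*R^2 := mul_le_mul hA1 hY1 hY0 (sq_nonneg R)
    have f3 : Ψ*Ψ ≤ R^2*R^2 := mul_le_mul hΨ1 hΨ1 hΨ0 (sq_nonneg R)
    have g1 : A*Ψ*Gv ≤ R^2*R^2*Gv := mul_le_mul_of_nonneg_right f1 hG0
    have g2 : A*Y*Gv ≤ R^2*R^2*Gv := mul_le_mul_of_nonneg_right f2 hG0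
    have g3 : Ψ*Ψ*Gv ≤ R^2*R^2*Gv := mul_le_mul_of_nonneg_right f3 hG0
    have g4 : (n:ℝ)*(A*Ψ*Gv) ≤ (n:ℝ)*(R^2*R^2*Gv) := mul_le_mul_of_nonneg_left g1 hn0
    have hlamG : 2*lam*(R^2*R^2)*Gv = 8*(n:ℝ)*(R^2*R^2*Gv) + 66*(R^2*R^2*Gv) := by
      rw [hlam]; ring
    linarith [hAkey, g2, g3, g4, hlamG,
      mul_nonneg (mul_nonneg (sq_nonneg R) (sq_nonneg R)) hG0,
      mul_nonneg hn0 (mul_nonneg (mul_nonneg (sq_nonneg R) (sq_nonneg R)) hG0)]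
  -- boundary bound
  have hbdry : ∀ q : Spc n × ℝ, ‖q.1 - x₀‖ ≤ R → q.2 ∈ Set.Icc (t₀ - R^2) t₀ →
      (‖q.1 - x₀‖ = R ∨ q.2 = t₀ - R^2) → w q ≤ lam * (R^2*R^2) * M^2 := by
    intro q hq1 hq2 hcase
    have hvq : |v q| ≤ M := hM q hq1 hq2
    have hvsq : v q * v q ≤ M^2 := by nlinarith [abs_nonneg (v q), sq_abs (v q)]
    have hmain : aF t₀ R q * (psiF x₀ R q * psiF x₀ R q) * GF v q = 0 := by
      rcases hcase with hlat | hbot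
      · have hz : psiF x₀ R q = 0 := by
          show R^2 - ∑ j, sF x₀ j q * sF x₀ j q = 0
          rw [sum_sF_sq, hlat]; ring
        rw [hz]; ring
      · have hz : aF t₀ R q = 0 := by show q.2 - t₀ + R^2 = 0; rw [hbot]; ring
        rw [hz]; ring
    have hw0 : w q = aF t₀ R q * (psiF x₀ R q * psiF x₀ R q) * GF v q
        + lam * (R^2*R^2) * (v q * v q) := rfl
    rw [hw0, hmain]
    have : lam * (R^2*R^2) * (v q * v q) ≤ lam * (R^2*R^2) * M^2 := by
      apply mul_le_mul_of_nonneg_left hvsq; positivity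
    linarith
  -- apply the maximum principle
  have hwc : ContDiff ℝ (⊤ : ℕ∞) w := contDiff_wF hv x₀ t₀ R lam
  have hmax := maxPrinciple x₀ t₀ R (lam * (R^2*R^2) * M^2) hR hwc hineq hbdry
  have hcenter := hmax (x₀, t₀) hcen1 hcmem
  -- evaluate at the center
  have hψc : psiF x₀ R (x₀, t₀) = R^2 := by
    show R^2 - ∑ j, sF x₀ j (x₀, t₀) * sF x₀ j (x₀, t₀) = R^2
    rw [sum_sF_sq, show ((x₀, t₀) : Spc n × ℝ).1 - x₀ = 0 from sub_self x₀, norm_zero]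
    ring
  have hac : aF t₀ R (x₀, t₀) = R^2 := by show t₀ - t₀ + R^2 = R^2; ring
  have hGc : (pd i₀ v (x₀, t₀))^2 ≤ GF v (x₀, t₀) := by
    have h := Finset.single_le_sum (f := fun j => pd j v (x₀, t₀) * pd j v (x₀, t₀))
      (fun j _ => mul_self_nonneg _) (Finset.mem_univ i₀)
    have : GF v (x₀, t₀) = ∑ j, pd j v (x₀, t₀) * pd j v (x₀, t₀) := rfl
    rw [this, sq]
    exact h
  have hwcenter : w (x₀, t₀) = R^2 * (R^2 * R^2) * GF v (x₀, t₀)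
      + lam * (R^2*R^2) * (v (x₀, t₀) * v (x₀, t₀)) := by
    have hw0 : w (x₀, t₀) = aF t₀ R (x₀, t₀)
        * (psiF x₀ R (x₀, t₀) * psiF x₀ R (x₀, t₀)) * GF v (x₀, t₀)
        + lam * (R^2*R^2) * (v (x₀, t₀) * v (x₀, t₀)) := rfl
    rw [hw0, hψc, hac]
  rw [hwcenter] at hcenter
  have hR4 : (0:ℝ) < R^2 * R^2 := by positivity
  have p1 : R^2*(R^2*R^2)*((pd i₀ v (x₀, t₀))^2) ≤ R^2*(R^2*R^2)*(GF v (x₀, t₀)) :=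
    mul_le_mul_of_nonneg_left hGc (by positivity)
  have p2 : 0 ≤ lam*(R^2*R^2)*(v (x₀, t₀) * v (x₀, t₀)) :=
    mul_nonneg (mul_nonneg hlam0 (by positivity)) (mul_self_nonneg _)
  have hfin : R^2 * (pd i₀ v (x₀, t₀))^2 * (R^2 * R^2) ≤ lam * M^2 * (R^2 * R^2) := by
    linarith [p1, p2, hcenter]
  have := le_of_mul_le_mul_right hfin hR4
  rw [hlam] at this
  exact this

end Liouville
namespace Liouville

open Filter Topology

variable {n : ℕ}

theorem abs_le_of_sq_le' {x m : ℝ} (hm : 0 ≤ m) (h : x^2 ≤ m^2) : |x| ≤ m := by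
  have h2 := Real.sqrt_le_sqrt h
  rwa [Real.sqrt_sq_eq_abs, Real.sqrt_sq hm] at h2

/-- From the quadratic Bernstein bound to an abs bound. -/
theorem bernstein_abs {v : Spc n × ℝ → ℝ} (hv : ContDiff ℝ (⊤ : ℕ∞) v) (hcal : Caloric v)
    (x₀ : Spc n) (t₀ R M : ℝ) (hR : 0 < R) (hM0 : 0 ≤ M)
    (hM : ∀ q : Spc n × ℝ, ‖q.1 - x₀‖ ≤ R → q.2 ∈ Set.Icc (t₀ - R^2) t₀ → |v q| ≤ M)
    (i₀ : Fin n) :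
    |pd i₀ v (x₀, t₀)| ≤ Real.sqrt (4*(n:ℝ)+33) * M / R := by
  have h := bernstein hv hcal x₀ t₀ R M hR hM i₀
  have hc : (0:ℝ) ≤ Real.sqrt (4*(n:ℝ)+33) := Real.sqrt_nonneg _
  refine abs_le_of_sq_le' (by positivity) ?_
  have hsq : (Real.sqrt (4*(n:ℝ)+33) * M / R)^2 = (4*(n:ℝ)+33) * M^2 / R^2 := by
    rw [div_pow, mul_pow, Real.sq_sqrt (by positivity)]
  rw [hsq, le_div_iff₀ (by positivity : (0:ℝ) < R^2)]
  nlinarith [h]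

set_option maxHeartbeats 1000000 in
theorem second_vanish {v : Spc n × ℝ → ℝ} (hv : ContDiff ℝ (⊤ : ℕ∞) v) (hcal : Caloric v)
    {C α : ℝ} (hC : 0 < C) (hα : 0 < α) (hα1 : α < 1)
    (hgr : ∀ R : ℝ, 1 ≤ R → ∀ p : Spc n × ℝ, ‖p.1‖ + Real.sqrt |p.2| < R →
      |v p| ≤ C * R^(1+α)) :
    ∀ (p : Spc n × ℝ) (i j : Fin n), pd j (pd i v) p = 0 := by
  intro p i j
  set a : ℝ := ‖p.1‖ + Real.sqrt |p.2| with ha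
  have ha0 : 0 ≤ a := add_nonneg (norm_nonneg _) (Real.sqrt_nonneg _)
  set cn : ℝ := Real.sqrt (4*(n:ℝ)+33) with hcn
  have hcn0 : (0:ℝ) ≤ cn := Real.sqrt_nonneg _
  set K : ℝ := cn * (cn * (C * 7^(1+α))) with hK
  have hK0 : 0 ≤ K := by positivity
  -- the quantitative bound for large R
  have main : ∀ R : ℝ, max 1 a ≤ R → |pd j (pd i v) p| ≤ K * R^(α-1) := by
    intro R hRge
    have hR1 : (1:ℝ) ≤ R := le_trans (le_max_left _ _) hRge
    have hRa : a ≤ R := le_trans (le_max_right _ _) hRge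
    have hR : (0:ℝ) < R := lt_of_lt_of_le one_pos hR1
    set M₀ : ℝ := C * (7*R)^(1+α) with hM₀
    have hM₀0 : 0 ≤ M₀ := by positivity
    -- growth bound on the double cylinder around p
    have hbig : ∀ z : Spc n × ℝ, ‖z.1 - p.1‖ ≤ 2*R → z.2 ∈ Set.Icc (p.2 - 2*R^2) p.2 →
        |v z| ≤ M₀ := by
      intro z hz1 hz2
      refine hgr (7*R) (by linarith) z ?_
      have h1 : ‖z.1‖ ≤ ‖p.1‖ + 2*R := by
        have := norm_add_le (z.1 - p.1) p.1
        simp only [sub_add_cancel] at this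
        linarith
      have h2 : Real.sqrt |z.2| ≤ Real.sqrt |p.2| + 2*R := by
        have hz2' : |z.2| ≤ |p.2| + 2*R^2 := by
          rcases hz2 with ⟨hl, hr⟩
          rcases abs_cases p.2 with ⟨he, _⟩ | ⟨he, _⟩ <;> rcases abs_cases z.2 with ⟨hf, _⟩ | ⟨hf, _⟩ <;>
            nlinarith [sq_nonneg R]
        have hb : |z.2| ≤ (Real.sqrt |p.2| + 2*R)^2 := by
          have hs := Real.sq_sqrt (abs_nonneg p.2)
          nlinarith [Real.sqrt_nonneg |p.2|]
        have := Real.sqrt_le_sqrt hb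
        rwa [Real.sqrt_sq (by positivity)] at this
      have : ‖z.1‖ + Real.sqrt |z.2| ≤ 2*a + 4*R := by
        rw [ha]; linarith
      have h3 : 2*a + 4*R < 7*R := by nlinarith
      linarith
    -- first Bernstein application : gradient bound on the cylinder around p
    set M₁ : ℝ := cn * M₀ / R with hM₁
    have hM₁0 : 0 ≤ M₁ := by positivity
    have hgrad : ∀ q : Spc n × ℝ, ‖q.1 - p.1‖ ≤ R → q.2 ∈ Set.Icc (p.2 - R^2) p.2 →
        |pd i v q| ≤ M₁ := by
      intro q hq1 hq2
      have hMq : ∀ z : Spc n × ℝ, ‖z.1 - q.1‖ ≤ R → z.2 ∈ Set.Icc (q.2 - R^2) q.2 →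
          |v z| ≤ M₀ := by
        intro z hz1 hz2
        refine hbig z ?_ ?_
        · have h4 : ‖z.1 - p.1‖ ≤ ‖z.1 - q.1‖ + ‖q.1 - p.1‖ := norm_sub_le_norm_sub_add_norm_sub _ _ _
          linarith
        · rcases hz2 with ⟨hl, hr⟩
          rcases hq2 with ⟨hl', hr'⟩
          exact ⟨by nlinarith, by linarith⟩
      have := bernstein_abs hv hcal q.1 q.2 R M₀ hR hM₀0 hMq i
      rw [hM₁]
      simpa using this
    -- second Bernstein application at p
    have hcal' : Caloric (pd i v) := caloric_pd hv hcal i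
    have h2 := bernstein_abs (show ContDiff ℝ (⊤ : ℕ∞) (pd i v) from contDiff_Dv _ hv) hcal'
      p.1 p.2 R M₁ hR hM₁0 hgrad j
    have hpp : ((p.1, p.2) : Spc n × ℝ) = p := by simp
    rw [hpp] at h2
    -- now unfold the bound
    have hval : cn * M₁ / R = K * R^(α-1) := by
      have h7R : (7*R)^(1+α) = 7^(1+α) * R^(1+α) := Real.mul_rpow (by norm_num) hR.le
      have hpow : R^(1+α) = R^(α-1) * R^2 := by
        rw [← Real.rpow_natCast R 2, ← Real.rpow_add hR]
        congr 1
        push_cast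
        ring
      have hRR : (R*R) ≠ 0 := by positivity
      have e1 : cn * M₁ / R = (cn * (cn * M₀)) / (R * R) := by
        rw [hM₁, ← mul_div_assoc, div_div]
      have e2 : M₀ = (C * 7^(1+α)) * R^(α-1) * (R*R) := by
        rw [hM₀, h7R, hpow]; ring
      have e3 : cn * (cn * M₀) = K * R^(α-1) * (R*R) := by rw [e2, hK]; ring
      rw [e1, e3, mul_div_cancel_right₀ _ hRR]
    rw [← hval]
    exact h2
  -- let R → ∞
  have htend : Tendsto (fun R : ℝ => K * R^(α-1)) atTop (𝓝 0) := by
    have h1 : Tendsto (fun R : ℝ => R^(-(1-α))) atTop (𝓝 0) :=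
      tendsto_rpow_neg_atTop (by linarith)
    have h2 : (fun R : ℝ => K * R^(α-1)) = fun R => K * R^(-(1-α)) := by
      funext R; rw [show α - 1 = -(1-α) from by ring]
    rw [h2]
    have h3 := h1.const_mul K
    rwa [mul_zero] at h3
  have hev : ∀ᶠ R in atTop, |pd j (pd i v) p| ≤ K * R^(α-1) :=
    eventually_atTop.2 ⟨max 1 a, main⟩
  have hle : |pd j (pd i v) p| ≤ 0 := ge_of_tendsto htend hev
  have := abs_nonneg (pd j (pd i v) p)
  have : |pd j (pd i v) p| = 0 := le_antisymm hle this
  exact abs_eq_zero.1 this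

end Liouville
namespace Liouville

variable {n : ℕ}

theorem euclid_decomp (x : Spc n) :
    ∑ k, x k • EuclideanSpace.single k (1:ℝ) = x := by
  have h := (EuclideanSpace.basisFun (Fin n) ℝ).sum_repr x
  simpa [EuclideanSpace.basisFun_repr, EuclideanSpace.basisFun_apply] using h

theorem fderiv_zero_of_partials {f : Spc n × ℝ → ℝ} (hf : ContDiff ℝ (⊤ : ℕ∞) f)
    (hpd : ∀ (z : Spc n × ℝ) (k : Fin n), pd k f z = 0) (hpt : ∀ z, pt f z = 0)
    (z : Spc n × ℝ) : fderiv ℝ f z = 0 := by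
  set L := fderiv ℝ f z with hL
  apply ContinuousLinearMap.ext
  intro d
  show L d = 0
  have hd : d = (d.1, (0:ℝ)) + ((0:Spc n), d.2) := by
    rw [Prod.mk_add_mk, add_zero, zero_add]
  rw [hd, map_add]
  have h1 : L (d.1, (0:ℝ)) = 0 := by
    have e : L (d.1, (0:ℝ)) = (L.comp (ContinuousLinearMap.inl ℝ (Spc n) ℝ)) d.1 := by simp
    rw [e, ← euclid_decomp d.1, map_sum]
    refine Finset.sum_eq_zero fun k _ => ?_
    rw [_root_.map_smul]
    have e2 : (L.comp (ContinuousLinearMap.inl ℝ (Spc n) ℝ)) (EuclideanSpace.single k 1)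
        = pd k f z := by
      show L (EuclideanSpace.single k (1:ℝ), (0:ℝ)) = pd k f z
      rfl
    rw [e2, hpd z k, smul_zero]
  have h2 : L ((0:Spc n), d.2) = 0 := by
    have hsm : ((0:Spc n), d.2) = d.2 • (((0:Spc n), (1:ℝ)) : Spc n × ℝ) := by
      rw [Prod.smul_mk, smul_zero, smul_eq_mul, mul_one]
    rw [hsm, _root_.map_smul]
    have e3 : L ((0:Spc n), (1:ℝ)) = pt f z := rfl
    rw [e3, hpt z, smul_zero]
  rw [h1, h2, add_zero]

theorem eq_of_partials_zero {f : Spc n × ℝ → ℝ} (hf : ContDiff ℝ (⊤ : ℕ∞) f)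
    (hpd : ∀ (z : Spc n × ℝ) (k : Fin n), pd k f z = 0) (hpt : ∀ z, pt f z = 0)
    (z : Spc n × ℝ) : f z = f (0, 0) :=
  is_const_of_fderiv_eq_zero (hf.differentiable (by simp))
    (fun y => fderiv_zero_of_partials hf hpd hpt y) z (0, 0)

end Liouville

open Liouville in
open RealInnerProductSpace in
theorem stmt2' (n : ℕ) (hn : 1 ≤ n) (α C : ℝ) (hα : 0 < α) (hα1 : α < 1) (hC : 0 < C)
    (u : Spc n × ℝ → ℝ) (hu : ContDiff ℝ (⊤ : ℕ∞) u)
    (heat : ∀ p : Spc n × ℝ, timeDeriv u p = lapl u p)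
    (hgrowth : ∀ R : ℝ, 1 ≤ R → ∀ p ∈ Qcyl n R 0 0,
      |u p - u (0, 0) - ⟪spGrad u (0, 0), p.1⟫| ≤ C * R ^ (1 + α)) :
    ∀ p : Spc n × ℝ, u p = u (0, 0) + ⟪spGrad u (0, 0), p.1⟫ := by
  intro p
  set g : Spc n := spGrad u (0, 0) with hg
  set L : Spc n × ℝ →L[ℝ] ℝ :=
    (innerSL ℝ g).comp (ContinuousLinearMap.fst ℝ (Spc n) ℝ) with hLdef
  have hLa : ∀ q : Spc n × ℝ, L q = ⟪g, q.1⟫ := fun q => rfl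
  set v : Spc n × ℝ → ℝ := fun q => u q - u (0, 0) - L q with hvdef
  have hv : ContDiff ℝ (⊤ : ℕ∞) v := (hu.sub contDiff_const).sub L.contDiff
  -- derivative identities
  have hDv : ∀ (d : Spc n × ℝ) (q : Spc n × ℝ), Dv d v q = Dv d u q - L d := by
    intro d q
    have h := ((hasFDerivAt' hu q).sub_const (u (0, 0))).sub (L.hasFDerivAt (x := q))
    show fderiv ℝ v q d = _
    rw [(show HasFDerivAt v _ q from h).fderiv]
    rfl
  have hptv : ∀ q, pt v q = pt u q := by
    intro q
    show Dv ((0:Spc n), (1:ℝ)) v q = pt u q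
    rw [hDv]
    have : L ((0:Spc n), (1:ℝ)) = 0 := by
      rw [hLa]
      simp
    rw [this, sub_zero]
    rfl
  have hpdv : ∀ (k : Fin n) (q : Spc n × ℝ), pd k v q = pd k u q - g k := by
    intro k q
    show Dv (ev n k) v q = pd k u q - g k
    rw [hDv]
    have : L (ev n k) = g k := by
      rw [hLa]
      show ⟪g, EuclideanSpace.single k (1:ℝ)⟫ = g k
      rw [EuclideanSpace.inner_single_right]
      simp
    rw [this]
    rfl
  have hsec : ∀ (q : Spc n × ℝ) (k j : Fin n), pd j (pd k v) q = pd j (pd k u) q := by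
    intro q k j
    have hfe : pd k v = fun q' => pd k u q' - g k := funext fun q' => hpdv k q'
    show Dv (ev n j) (pd k v) q = _
    rw [hfe]
    have h := Dv_sub (ev n j) (show ContDiff ℝ (⊤ : ℕ∞) (pd k u) from contDiff_Dv _ hu)
      (contDiff_const (c := g k)) q
    rw [h, Dv_const, sub_zero]
    rfl
  have hcalv : Caloric v := by
    intro q
    rw [hptv q]
    have h1 : pt u q = timeDeriv u q := (timeDeriv_eq hu q).symm
    rw [h1, heat q, lapl_eq hu q]
    exact Finset.sum_congr rfl fun k _ => (hsec q k k).symm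
  -- growth
  have hgr : ∀ R : ℝ, 1 ≤ R → ∀ z : Spc n × ℝ, ‖z.1‖ + Real.sqrt |z.2| < R →
      |v z| ≤ C * R ^ (1 + α) := by
    intro R hR z hz
    have hmem : z ∈ Qcyl n R 0 0 := by
      show ‖z.1 - 0‖ + Real.sqrt |z.2 - 0| < R
      simpa using hz
    have := hgrowth R hR z hmem
    have he : u z - u (0, 0) - ⟪g, z.1⟫ = v z := by rw [hvdef]; simp [hLa]
    rwa [he] at this
  have hsecond := second_vanish hv hcalv hC hα hα1 hgr
  -- pt v vanishes
  have hptv0 : ∀ q, pt v q = 0 := by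
    intro q
    rw [hcalv q]
    exact Finset.sum_eq_zero fun k _ => hsecond q k k
  -- each pd k v is constant, equal to its value at the origin which is 0
  have hpdv0 : ∀ (k : Fin n) (q : Spc n × ℝ), pd k v q = 0 := by
    intro k q
    have hcd : ContDiff ℝ (⊤ : ℕ∞) (pd k v) := contDiff_Dv _ hv
    have hpt' : ∀ z, pt (pd k v) z = 0 := by
      intro z
      have h1 : pt (pd k v) z = pd k (pt v) z := Dv_comm _ _ hv z
      have h2 : pt v = fun _ => (0:ℝ) := funext fun q' => hptv0 q'
      rw [h1]
      show Dv (ev n k) (pt v) z = 0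
      rw [h2]
      exact Dv_const _ _ z
    have hconst := eq_of_partials_zero hcd (fun z j => hsecond z k j) hpt' q
    rw [hconst, hpdv k (0, 0)]
    have : g k = pd k u (0, 0) := by
      rw [hg]
      exact spGrad_apply hu (0, 0) k
    rw [this]
    ring
  -- v is constant equal to 0
  have hv0 : v p = v (0, 0) := eq_of_partials_zero hv (fun z k => hpdv0 k z) hptv0 p
  have hv00 : v (0, 0) = 0 := by
    rw [hvdef]
    have : L ((0 : Spc n), (0:ℝ)) = 0 := by rw [hLa]; simp
    simp [this]
  have hvp : v p = 0 := by rw [hv0, hv00]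
  have h' : u p - u (0, 0) - L p = 0 := hvp
  rw [hLa p] at h'
  linarith [h']
open RealInnerProductSpace in
/-- Liouville theorem: an entire smooth caloric function with subquadratic
growth `R^{1+α}` away from its linearization at the origin is affine. -/
theorem stmt2 (n : ℕ) (hn : 1 ≤ n) (α C : ℝ) (hα : 0 < α) (hα1 : α < 1) (hC : 0 < C)
    (u : Spc n × ℝ → ℝ) (hu : ContDiff ℝ (⊤ : ℕ∞) u)
    (heat : ∀ p : Spc n × ℝ, timeDeriv u p = lapl u p)
    (hgrowth : ∀ R : ℝ, 1 ≤ R → ∀ p ∈ Qcyl n R 0 0,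
      |u p - u (0, 0) - ⟪spGrad u (0, 0), p.1⟫| ≤ C * R ^ (1 + α)) :
    ∀ p : Spc n × ℝ, u p = u (0, 0) + ⟪spGrad u (0, 0), p.1⟫ :=
  stmt2' n hn α C hα hα1 hC u hu heat hgrowth

end
end

section
/- Let n ≥ 1, T > 0, ε > 0 and c > 0. Let u be smooth (C^∞) on B̄_1 × [0,T] and satisfy ∂_t u − Δu = f_ε(u) at every point of B_1 × (0,T]. If ∂_t u ≥ c at every point of (B̄_1 × {0}) ∪ (∂B_1 × [0,T]), then ∂_t u ≥ c at every point of B̄_1 × [0,T]; in particular u(x,t₂) − u(x,t₁) ≥ c(t₂ − t₁) for all x ∈ B̄_1 and 0 ≤ t₁ ≤ t₂ ≤ T. -/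
open MeasureTheory Metric Set Filter

noncomputable section

/-- The regularized right-hand side `f_ε`. -/
def feps (ε x : ℝ) : ℝ := if x < 0 then 0 else if x ≤ ε then x / ε else 1

open Topology

namespace Stmt5Aux

variable {n : ℕ}

def sv (i : Fin n) : Spc n × ℝ := (EuclideanSpace.single i (1 : ℝ), (0 : ℝ))

def tv : Spc n × ℝ := ((0 : Spc n), (1 : ℝ))

lemma hline {g : Spc n × ℝ → ℝ} (hg : ContDiff ℝ (⊤ : ℕ∞) g) (q a : Spc n × ℝ) (s : ℝ) :
    HasDerivAt (fun h : ℝ => g (q + h • a)) (fderiv ℝ g (q + s • a) a) s := by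
  have h1 : HasDerivAt (fun h : ℝ => q + h • a) a s := by
    simpa using ((hasDerivAt_id s).smul_const a).const_add q
  exact ((hg.differentiable (by simp) _).hasFDerivAt).comp_hasDerivAt s h1

lemma htime {g : Spc n × ℝ → ℝ} (hg : ContDiff ℝ (⊤ : ℕ∞) g) (p : Spc n × ℝ) :
    HasDerivAt (fun s => g (p.1, s)) (fderiv ℝ g p tv) p.2 := by
  have := hline hg (p.1, 0) tv p.2
  simp only [tv, Prod.smul_mk, Prod.mk_add_mk, smul_zero, add_zero, smul_eq_mul, mul_one,
    zero_add] at this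
  exact this

lemma timeDeriv_eq {g : Spc n × ℝ → ℝ} (hg : ContDiff ℝ (⊤ : ℕ∞) g) (p : Spc n × ℝ) :
    timeDeriv g p = fderiv ℝ g p tv := (htime hg p).deriv

lemma dirPoint_eq (p : Spc n × ℝ) (i : Fin n) (h : ℝ) :
    dirPoint p i h = p + h • sv i := by
  simp [dirPoint, sv, Prod.ext_iff]

lemma spGrad_eq {g : Spc n × ℝ → ℝ} (hg : ContDiff ℝ (⊤ : ℕ∞) g) (p : Spc n × ℝ) (i : Fin n) :
    spGrad g p i = fderiv ℝ g p (sv i) := by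
  have h1 : HasFDerivAt (fun y : Spc n => (y, p.2)) (ContinuousLinearMap.inl ℝ (Spc n) ℝ) p.1 :=
    (hasFDerivAt_id p.1).prodMk (hasFDerivAt_const p.2 p.1)
  have hdiff : HasFDerivAt (fun y : Spc n => g (y, p.2))
      ((fderiv ℝ g p).comp (ContinuousLinearMap.inl ℝ (Spc n) ℝ)) p.1 := by
    have := ((hg.differentiable (by simp)) (p.1, p.2)).hasFDerivAt.comp p.1 h1
    exact this
  have hgrad : HasGradientAt (fun y : Spc n => g (y, p.2)) (spGrad g p) p.1 :=
    hdiff.differentiableAt.hasGradientAt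
  have h2 := hgrad.hasFDerivAt.unique hdiff
  have h3 := congrArg (fun L => L (EuclideanSpace.single i (1 : ℝ))) h2
  simp only [InnerProductSpace.toDual_apply_apply, ContinuousLinearMap.comp_apply,
    ContinuousLinearMap.inl_apply] at h3
  rw [real_inner_comm] at h3
  rw [show (fderiv ℝ g p (sv i) : ℝ)
      = fderiv ℝ g p (EuclideanSpace.single i (1 : ℝ), (0 : ℝ)) from rfl]
  rw [← h3, EuclideanSpace.inner_single_left]
  simp

lemma fderiv_apply_const_smooth {g : Spc n × ℝ → ℝ} (hg : ContDiff ℝ (⊤ : ℕ∞) g) (a : Spc n × ℝ) :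
    ContDiff ℝ (⊤ : ℕ∞) (fun q => fderiv ℝ g q a) :=
  (hg.fderiv_right (by simp)).clm_apply contDiff_const

lemma swap2 {g : Spc n × ℝ → ℝ} (hg : ContDiff ℝ (⊤ : ℕ∞) g) (p a b : Spc n × ℝ) :
    fderiv ℝ (fun q => fderiv ℝ g q a) p b = fderiv ℝ (fun q => fderiv ℝ g q b) p a := by
  have hd : ∀ y, HasFDerivAt g (fderiv ℝ g y) y := fun y =>
    ((hg.differentiable (by simp)) y).hasFDerivAt
  have hfd : ContDiff ℝ (⊤ : ℕ∞) (fderiv ℝ g) := hg.fderiv_right (by simp)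
  have h2 : HasFDerivAt (fderiv ℝ g) (fderiv ℝ (fderiv ℝ g) p) p :=
    ((hfd.differentiable (by simp)) p).hasFDerivAt
  have hsym := second_derivative_symmetric hd h2 a b
  have happ : ∀ c : Spc n × ℝ,
      fderiv ℝ (fun q => fderiv ℝ g q c) p = (fderiv ℝ (fderiv ℝ g) p).flip c := by
    intro c
    have h3 := h2.clm_apply (hasFDerivAt_const c p)
    have h4 := h3.fderiv
    simpa using h4
  rw [happ a, happ b]
  simp only [ContinuousLinearMap.flip_apply]
  exact hsym.symm

lemma lapl_eq {g : Spc n × ℝ → ℝ} (hg : ContDiff ℝ (⊤ : ℕ∞) g) (p : Spc n × ℝ) :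
    lapl g p = ∑ i, fderiv ℝ (fun q => fderiv ℝ g q (sv i)) p (sv i) := by
  unfold lapl secondPartial
  refine Finset.sum_congr rfl fun i _ => ?_
  have hfun : (fun h : ℝ => spGrad g (dirPoint p i h) i)
      = fun h : ℝ => (fun q => fderiv ℝ g q (sv i)) (p + h • sv i) := by
    funext h
    rw [spGrad_eq hg, dirPoint_eq]
  rw [hfun]
  have := (hline (fderiv_apply_const_smooth hg (sv i)) p (sv i) 0).deriv
  simpa using this

lemma second_test {φ : ℝ → ℝ} {d2 : ℝ} (hφ1 : Differentiable ℝ φ)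
    (hφ2 : HasDerivAt (deriv φ) d2 0) (hmin : IsLocalMin φ 0) : 0 ≤ d2 := by
  by_contra hlt
  push_neg at hlt
  have h0 : deriv φ 0 = 0 := hmin.deriv_eq_zero
  have hslope : Tendsto (slope (deriv φ) 0) (𝓝[≠] (0 : ℝ)) (𝓝 d2) :=
    hasDerivAt_iff_tendsto_slope.mp hφ2
  have hev : {h : ℝ | slope (deriv φ) 0 h < 0} ∈ 𝓝[≠] (0 : ℝ) := hslope (Iio_mem_nhds hlt)
  obtain ⟨δ, hδ, hball⟩ := Metric.mem_nhdsWithin_iff.mp hev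
  obtain ⟨δ₂, hδ₂, hminn⟩ := Metric.eventually_nhds_iff.mp hmin
  set r := min δ δ₂ / 2 with hr
  have hrpos : 0 < r := by positivity
  have hrδ : r < δ := by
    have := min_le_left δ δ₂; simp only [hr]; linarith
  have hrδ₂ : r < δ₂ := by
    have := min_le_right δ δ₂; simp only [hr]; linarith
  have hmono : StrictMonoOn φ (Icc (-r) 0) := by
    apply strictMonoOn_of_deriv_pos (convex_Icc _ _) (hφ1.continuous.continuousOn)
    intro x hx
    rw [interior_Icc] at hx
    have hxne : x ≠ 0 := ne_of_lt hx.2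
    have hxb : x ∈ Metric.ball (0 : ℝ) δ := by
      rw [Metric.mem_ball, Real.dist_eq, sub_zero, abs_lt]
      constructor <;> nlinarith [hx.1, hx.2]
    have h5 := hball ⟨hxb, hxne⟩
    simp only [mem_setOf_eq, slope_def_field] at h5
    have hsl : deriv φ x / x < 0 := by simpa [h0] using h5
    rcases div_neg_iff.mp hsl with ⟨h1, h2⟩ | ⟨h1, h2⟩ <;> linarith [hx.2]
  have h4 : φ (-r) < φ 0 :=
    hmono (by constructor <;> simp [hrpos.le]) (by simp [hrpos.le]) (by linarith)
  have h5 : φ 0 ≤ φ (-r) := by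
    apply hminn
    rw [Real.dist_eq]
    simp only [sub_zero, abs_neg, abs_of_pos hrpos]
    exact hrδ₂
  linarith

lemma feps_mono {ε : ℝ} (hε : 0 < ε) {x y : ℝ} (hxy : x ≤ y) : feps ε x ≤ feps ε y := by
  unfold feps
  split_ifs <;>
    first
      | rfl
      | positivity
      | linarith
      | (apply div_nonneg <;> linarith)
      | gcongr
      | (rw [div_le_one hε]; linarith)

lemma feps_lip {ε : ℝ} (hε : 0 < ε) {x y : ℝ} (hxy : x ≤ y) :
    feps ε y - feps ε x ≤ (y - x) / ε := by
  unfold feps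
  split_ifs <;>
    first
      | (rw [le_div_iff₀ hε]; field_simp; nlinarith)
      | (rw [sub_div])

lemma feps_key {ε : ℝ} (hε : 0 < ε) (a b : ℝ) :
    min 0 ((a - b) / ε) ≤ feps ε a - feps ε b := by
  rcases le_total a b with h | h
  · have h1 := feps_lip hε h
    have h2 : (a - b) / ε = -((b - a) / ε) := by ring
    calc min 0 ((a - b) / ε) ≤ (a - b) / ε := min_le_right _ _
      _ ≤ feps ε a - feps ε b := by rw [h2]; linarith
  · have h1 := feps_mono hε h
    calc min 0 ((a - b) / ε) ≤ 0 := min_le_left _ _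
      _ ≤ feps ε a - feps ε b := by linarith

lemma min0_div {z d : ℝ} (hd : 0 < d) : min 0 z / d = min 0 (z / d) := by
  rcases le_total z 0 with h | h
  · rw [min_eq_right h, min_eq_right (div_nonpos_of_nonpos_of_nonneg h hd.le)]
  · rw [min_eq_left h, min_eq_left (div_nonneg h hd.le), zero_div]

end Stmt5Aux

open Stmt5Aux

/-- minimum principle for the time derivative of a smooth solution of the
regularized equation: `∂ₜu ≥ c` on the parabolic boundary propagates to the whole cylinder;
in particular `u` grows at least linearly in time. -/
theorem stmt5 (n : ℕ) (hn : 1 ≤ n) (T ε c : ℝ) (hT : 0 < T) (hε : 0 < ε) (hc : 0 < c)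
    (u : Spc n × ℝ → ℝ) (hu : ContDiff ℝ (⊤ : ℕ∞) u)
    (hpde : ∀ p ∈ ball (0 : Spc n) 1 ×ˢ Ioc 0 T, timeDeriv u p - lapl u p = feps ε (u p))
    (hbd : ∀ p ∈ (closedBall (0 : Spc n) 1 ×ˢ ({0} : Set ℝ)) ∪ (sphere (0 : Spc n) 1 ×ˢ Icc 0 T),
      c ≤ timeDeriv u p) :
    (∀ p ∈ closedBall (0 : Spc n) 1 ×ˢ Icc 0 T, c ≤ timeDeriv u p) ∧
    (∀ x ∈ closedBall (0 : Spc n) 1, ∀ t₁ t₂ : ℝ, 0 ≤ t₁ → t₁ ≤ t₂ → t₂ ≤ T →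
      c * (t₂ - t₁) ≤ u (x, t₂) - u (x, t₁)) := by
  classical
  set v := timeDeriv u with hvdef
  have hvt : ∀ p : Spc n × ℝ, v p = fderiv ℝ u p tv := fun p => timeDeriv_eq hu p
  have hv_eq : v = fun p => fderiv ℝ u p tv := funext hvt
  have hvs : ContDiff ℝ (⊤ : ℕ∞) v := by
    rw [hv_eq]; exact fderiv_apply_const_smooth hu tv
  have key : ∀ p ∈ closedBall (0 : Spc n) 1 ×ˢ Icc 0 T, c ≤ v p := by
    by_contra hcon
    push_neg at hcon
    obtain ⟨pb, hpbK, hpb⟩ := hcon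
    set w : Spc n × ℝ → ℝ := fun p => (v p - c) * Real.exp (-p.2 / ε) with hwdef
    have hwc : Continuous w :=
      (hvs.continuous.sub continuous_const).mul
        (Real.continuous_exp.comp ((continuous_snd.neg).div_const ε))
    have hK : IsCompact (closedBall (0 : Spc n) 1 ×ˢ Icc 0 T) :=
      (isCompact_closedBall _ _).prod isCompact_Icc
    have hKne : (closedBall (0 : Spc n) 1 ×ˢ Icc 0 T).Nonempty :=
      ⟨(0, 0), by simp [hT.le]⟩
    obtain ⟨p₀, hp₀K, hp₀min'⟩ := hK.exists_isMinOn hKne hwc.continuousOn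
    have hp₀min : ∀ q ∈ closedBall (0 : Spc n) 1 ×ˢ Icc 0 T, w p₀ ≤ w q :=
      fun q hq => hp₀min' hq
    have hw0 : w p₀ < 0 := by
      refine lt_of_le_of_lt (hp₀min pb hpbK) ?_
      exact mul_neg_of_neg_of_pos (by linarith) (Real.exp_pos _)
    have hvp0 : v p₀ < c := by
      by_contra hcon2
      push_neg at hcon2
      have : 0 ≤ w p₀ := mul_nonneg (by linarith) (Real.exp_pos _).le
      linarith
    obtain ⟨hx₀cb, ht₀Icc⟩ := hp₀K
    have hnotbd : p₀ ∉ (closedBall (0 : Spc n) 1 ×ˢ ({0} : Set ℝ))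
        ∪ (sphere (0 : Spc n) 1 ×ˢ Icc 0 T) :=
      fun hmem => absurd (hbd p₀ hmem) (not_le.mpr hvp0)
    have ht₀0 : p₀.2 ≠ 0 := by
      intro h
      exact hnotbd (Or.inl ⟨hx₀cb, by simp [h]⟩)
    have ht₀ : 0 < p₀.2 := lt_of_le_of_ne ht₀Icc.1 (Ne.symm ht₀0)
    have hx₀ : ‖p₀.1‖ < 1 := by
      rcases lt_or_eq_of_le (mem_closedBall_zero_iff.mp hx₀cb) with h | h
      · exact h
      · exact absurd (Or.inr ⟨mem_sphere_zero_iff_norm.mpr h, ht₀Icc⟩) hnotbd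
    set t₀ := p₀.2 with ht₀def
    -- spatial: Laplacian of v at p₀ is nonnegative
    have hlapl_nonneg : 0 ≤ lapl v p₀ := by
      rw [lapl_eq hvs]
      apply Finset.sum_nonneg
      intro i _
      set φ : ℝ → ℝ := fun h => v (p₀ + h • sv i) with hφdef
      have hφd : Differentiable ℝ φ := fun h => (hline hvs p₀ (sv i) h).differentiableAt
      have hφ' : deriv φ = fun h => fderiv ℝ v (p₀ + h • sv i) (sv i) :=
        funext fun h => (hline hvs p₀ (sv i) h).deriv
      have hφ'' : HasDerivAt (deriv φ)
          (fderiv ℝ (fun q => fderiv ℝ v q (sv i)) p₀ (sv i)) 0 := by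
        rw [hφ']
        have := hline (fderiv_apply_const_smooth hvs (sv i)) p₀ (sv i) 0
        simpa using this
      have hmin : IsLocalMin φ 0 := by
        rw [IsLocalMin, IsMinFilter]
        rw [Metric.eventually_nhds_iff]
        refine ⟨1 - ‖p₀.1‖, by linarith, fun h hh => ?_⟩
        rw [Real.dist_eq, sub_zero] at hh
        have hq : (p₀ + h • sv i) ∈ closedBall (0 : Spc n) 1 ×ˢ Icc 0 T := by
          constructor
          · show p₀.1 + h • EuclideanSpace.single i (1 : ℝ) ∈ closedBall (0 : Spc n) 1
            rw [mem_closedBall_zero_iff]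
            calc ‖p₀.1 + h • EuclideanSpace.single i (1 : ℝ)‖
                ≤ ‖p₀.1‖ + ‖h • EuclideanSpace.single i (1 : ℝ)‖ := norm_add_le _ _
              _ ≤ ‖p₀.1‖ + |h| * 1 := by
                  rw [norm_smul]
                  simp [EuclideanSpace.norm_single]
              _ ≤ 1 := by linarith
          · show t₀ + h • (0 : ℝ) ∈ Icc 0 T
            simpa using ht₀Icc
        have hwle := hp₀min _ hq
        have hsnd : (p₀ + h • sv i).2 = t₀ := by simp [sv, ht₀def]
        rw [hwdef] at hwle
        simp only [hsnd] at hwle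
        have hexp := Real.exp_pos (-t₀ / ε)
        have : v p₀ ≤ v (p₀ + h • sv i) := by nlinarith
        simpa [hφdef] using this
      exact second_test hφd hφ'' hmin
    -- time derivative of the Laplacian
    have hL : HasDerivAt (fun t => lapl u (p₀.1, t)) (lapl v p₀) t₀ := by
      have hfun : (fun t => lapl u (p₀.1, t))
          = fun t => ∑ i, (fun q => fderiv ℝ (fun q' => fderiv ℝ u q' (sv i)) q (sv i))
            ((p₀.1, t)) := funext fun t => lapl_eq hu (p₀.1, t)
      rw [hfun, lapl_eq hvs]
      apply HasDerivAt.fun_sum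
      intro i _
      have hGi : ContDiff ℝ (⊤ : ℕ∞)
          (fun q => fderiv ℝ (fun q' => fderiv ℝ u q' (sv i)) q (sv i)) :=
        fderiv_apply_const_smooth (fderiv_apply_const_smooth hu (sv i)) (sv i)
      have h1 := htime hGi p₀
      have h2 : fderiv ℝ (fun q => fderiv ℝ (fun q' => fderiv ℝ u q' (sv i)) q (sv i)) p₀ tv
          = fderiv ℝ (fun q => fderiv ℝ v q (sv i)) p₀ (sv i) := by
        have h3 : (fun q => fderiv ℝ (fun q' => fderiv ℝ u q' (sv i)) q tv)
            = fun q => fderiv ℝ v q (sv i) := by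
          funext q
          rw [swap2 hu q (sv i) tv, ← hv_eq]
        rw [swap2 (fderiv_apply_const_smooth hu (sv i)) p₀ (sv i) tv, h3]
      rw [← h2]
      exact h1
    -- time derivative pieces
    have hVt : HasDerivAt (fun t => v (p₀.1, t)) (fderiv ℝ v p₀ tv) t₀ := htime hvs p₀
    set Vt := fderiv ℝ v p₀ tv with hVtdef
    set L : ℝ → ℝ := fun t => lapl u (p₀.1, t) with hLdef
    set G : ℝ → ℝ := fun t => v (p₀.1, t) - L t with hGdef
    have hG : HasDerivAt G (Vt - lapl v p₀) t₀ := hVt.sub hL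
    have hGfe : ∀ t ∈ Ioc (0 : ℝ) T, G t = feps ε (u (p₀.1, t)) := by
      intro t ht
      have := hpde (p₀.1, t) ⟨mem_ball_zero_iff.mpr hx₀, ht⟩
      simpa [hGdef, hLdef, hvdef] using this
    have hu_t : HasDerivAt (fun s => u (p₀.1, s)) (v p₀) t₀ := by
      have := htime hu p₀
      rwa [← hvt p₀] at this
    have hmemIoo : Ioo (0 : ℝ) t₀ ∈ 𝓝[<] t₀ :=
      Ioo_mem_nhdsLT_of_mem ⟨ht₀, le_refl t₀⟩
    have hmono : 𝓝[<] t₀ ≤ 𝓝[≠] t₀ :=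
      nhdsWithin_mono t₀ fun x hx => ne_of_lt hx
    have hslopeG : Tendsto (slope G t₀) (𝓝[<] t₀) (𝓝 (Vt - lapl v p₀)) :=
      (hasDerivAt_iff_tendsto_slope.mp hG).mono_left hmono
    have hslopeu : Tendsto (fun t => min 0 (slope (fun s => u (p₀.1, s)) t₀ t / ε))
        (𝓝[<] t₀) (𝓝 (min 0 (v p₀ / ε))) := by
      apply Tendsto.min tendsto_const_nhds
      exact ((hasDerivAt_iff_tendsto_slope.mp hu_t).mono_left hmono).div_const ε
    have hbound : ∀ᶠ t in 𝓝[<] t₀,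
        min 0 (slope (fun s => u (p₀.1, s)) t₀ t / ε) ≤ slope G t₀ t := by
      filter_upwards [hmemIoo] with t ht
      have h1 : G t = feps ε (u (p₀.1, t)) := hGfe t ⟨ht.1, le_trans ht.2.le ht₀Icc.2⟩
      have h2 : G t₀ = feps ε (u (p₀.1, t₀)) := hGfe t₀ ⟨ht₀, ht₀Icc.2⟩
      have hd : 0 < t₀ - t := by linarith [ht.2]
      have hsl1 : slope G t₀ t = (feps ε (u (p₀.1, t₀)) - feps ε (u (p₀.1, t))) / (t₀ - t) := by
        rw [slope_def_field, h1, h2]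
        rw [div_eq_div_iff (by linarith) (by linarith)]
        ring
      have hsl2 : slope (fun s => u (p₀.1, s)) t₀ t
          = (u (p₀.1, t₀) - u (p₀.1, t)) / (t₀ - t) := by
        rw [slope_def_field, div_eq_div_iff (by linarith) (by linarith)]
        ring
      rw [hsl1, hsl2]
      have hfk := feps_key hε (u (p₀.1, t₀)) (u (p₀.1, t))
      calc min 0 ((u (p₀.1, t₀) - u (p₀.1, t)) / (t₀ - t) / ε)
          = min 0 ((u (p₀.1, t₀) - u (p₀.1, t)) / ε) / (t₀ - t) := by
            rw [min0_div hd]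
            congr 1
            rw [div_div, div_div, mul_comm]
        _ ≤ (feps ε (u (p₀.1, t₀)) - feps ε (u (p₀.1, t))) / (t₀ - t) := by gcongr
    have hineq : min 0 (v p₀ / ε) ≤ Vt - lapl v p₀ :=
      le_of_tendsto_of_tendsto hslopeu hslopeG hbound
    -- ψ' ≤ 0 from minimality in time
    have hψ : HasDerivAt (fun t => (v (p₀.1, t) - c) * Real.exp (-t / ε))
        (Vt * Real.exp (-t₀ / ε) + (v (p₀.1, t₀) - c) * (Real.exp (-t₀ / ε) * (-1 / ε))) t₀ := by
      have h1 : HasDerivAt (fun t : ℝ => -t / ε) (-1 / ε) t₀ := by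
        simpa using ((hasDerivAt_id t₀).neg).div_const ε
      exact (hVt.sub_const c).mul h1.exp
    have hψval : HasDerivAt (fun t => (v (p₀.1, t) - c) * Real.exp (-t / ε))
        (Vt * Real.exp (-t₀ / ε) + (v p₀ - c) * (Real.exp (-t₀ / ε) * (-1 / ε))) t₀ := hψ
    have hψle : Vt * Real.exp (-t₀ / ε) + (v p₀ - c) * (Real.exp (-t₀ / ε) * (-1 / ε)) ≤ 0 := by
      set ψ : ℝ → ℝ := fun t => (v (p₀.1, t) - c) * Real.exp (-t / ε) with hψdef
      have hψt₀ : ψ t₀ = w p₀ := rfl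
      have hslopeψ : Tendsto (slope ψ t₀) (𝓝[<] t₀)
          (𝓝 (Vt * Real.exp (-t₀ / ε) + (v p₀ - c) * (Real.exp (-t₀ / ε) * (-1 / ε)))) :=
        (hasDerivAt_iff_tendsto_slope.mp hψval).mono_left hmono
      refine le_of_tendsto hslopeψ ?_
      filter_upwards [hmemIoo] with t ht
      have hqK : ((p₀.1, t) : Spc n × ℝ) ∈ closedBall (0 : Spc n) 1 ×ˢ Icc 0 T :=
        ⟨hx₀cb, ⟨ht.1.le, le_trans ht.2.le ht₀Icc.2⟩⟩
      have hwq := hp₀min _ hqK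
      have hψt : ψ t = w (p₀.1, t) := rfl
      have hnum : 0 ≤ ψ t - ψ t₀ := by rw [hψt, hψt₀]; linarith
      rw [slope_def_field]
      apply div_nonpos_of_nonneg_of_nonpos hnum
      linarith [ht.2]
    -- combine
    have hE := Real.exp_pos (-t₀ / ε)
    have hVt_le : Vt ≤ (v p₀ - c) / ε := by
      have h2 : Vt * Real.exp (-t₀ / ε) ≤ ((v p₀ - c) / ε) * Real.exp (-t₀ / ε) := by
        have hr : (v p₀ - c) * (Real.exp (-t₀ / ε) * (-1 / ε))
            = -(((v p₀ - c) / ε) * Real.exp (-t₀ / ε)) := by ring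
        rw [hr] at hψle
        linarith
      exact le_of_mul_le_mul_right h2 hE
    have hfinal : min 0 (v p₀ / ε) ≤ (v p₀ - c) / ε := by
      calc min 0 (v p₀ / ε) ≤ Vt - lapl v p₀ := hineq
        _ ≤ Vt := by linarith
        _ ≤ (v p₀ - c) / ε := hVt_le
    rcases le_total 0 (v p₀ / ε) with h | h
    · rw [min_eq_left h] at hfinal
      have : (v p₀ - c) / ε < 0 := div_neg_of_neg_of_pos (by linarith) hε
      linarith
    · rw [min_eq_right h] at hfinal
      rw [div_le_div_iff_of_pos_right hε] at hfinal
      linarith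
  refine ⟨key, ?_⟩
  intro x hx t₁ t₂ h0 h12 h2T
  have hcont : ContinuousOn (fun t => u (x, t)) (Icc 0 T) :=
    (hu.continuous.comp (Continuous.prodMk_right x)).continuousOn
  have hdiff : DifferentiableOn ℝ (fun t => u (x, t)) (interior (Icc (0:ℝ) T)) := by
    intro t _
    exact (htime hu (x, t)).differentiableAt.differentiableWithinAt
  have hge : ∀ t ∈ interior (Icc (0 : ℝ) T), c ≤ deriv (fun s => u (x, s)) t := by
    intro t ht
    rw [interior_Icc] at ht
    have := key (x, t) ⟨hx, ⟨ht.1.le, ht.2.le⟩⟩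
    exact this
  exact Convex.mul_sub_le_image_sub_of_le_deriv (convex_Icc 0 T) hcont hdiff hge
    t₁ ⟨h0, le_trans h12 h2T⟩ t₂ ⟨le_trans h0 h12, h2T⟩ h12


end
end

section
/- Let n ≥ 1, c > 0, L > 0 and 0 < ρ < 1. Let u be a strong solution of ∂_t u − Δu = χ_{u>0} on Q_1 such that u(x,t₂) − u(x,t₁) ≥ c(t₂ − t₁) whenever (x,t₁), (x,t₂) ∈ Q_1 with t₁ ≤ t₂, and |∇u| ≤ L on Q_ρ. Then any two free boundary points (x,t), (y,s) ∈ Γ ∩ Q_ρ satisfy |t − s| ≤ (L/c)|x − y|. Consequently, Γ ∩ Q_ρ is the graph over the spatial variable of an (L/c)-Lipschitz function: there exists H, defined on the projection of Γ ∩ Q_ρ to ℝⁿ, with |H(x) − H(y)| ≤ (L/c)|x − y| and Γ ∩ Q_ρ = {(x, H(x)) : x in the domain of H}. -/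
open MeasureTheory Metric Set Filter

noncomputable section

/-!
On the free boundary `u = 0`. Given free boundary points `(x,t)`, `(y,s)` with `s ≤ t`, pick the
time `τ ∈ [s,t]` closest to `0`, so that `(x,τ)` and `(y,τ)` still lie in `Q_ρ`. Going from
`(y,s)` up to `(y,τ)`, across to `(x,τ)` and up to `(x,t)`, `u` gains at least `c(τ - s)` and
`c(t - τ)` on the vertical legs and loses at most `L‖x - y‖` on the horizontal one, whence
`0 = u(x,t) - u(y,s) ≥ c(t - s) - L‖x - y‖`. In particular a free boundary point of `Q_ρ` is
determined by its spatial coordinate.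
-/

lemma eq_zero_of_mem_frontier_setOf_pos {X : Type*} [TopologicalSpace X] {u : X → ℝ} {p : X}
    (hu : ContinuousAt u p) (hp : p ∈ frontier {q | 0 < u q}) : u p = 0 := by
  have hnonneg : 0 ≤ u p := by
    have := mem_closure_image hu (frontier_subset_closure hp)
    rw [← mem_Ici, ← closure_Ioi]
    exact closure_mono (image_subset_iff.mpr fun q hq => hq) this
  refine hnonneg.antisymm' (not_lt.mp fun hpos => hp.2 ?_)
  exact mem_interior_iff_mem_nhds.mpr (hu.eventually (lt_mem_nhds hpos))

lemma Set.InjOn.exists_eq_graph {α β : Type*} [Nonempty α] [Nonempty β] {S : Set (α × β)}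
    (hS : InjOn Prod.fst S) :
    ∃ H : α → β, (∀ p ∈ S, p.2 = H p.1) ∧ S = {p | p.1 ∈ Prod.fst '' S ∧ p.2 = H p.1} := by
  have hH : ∀ p ∈ S, p.2 = (Function.invFunOn Prod.fst S p.1).2 := fun p hp =>
    congrArg Prod.snd (hS.leftInvOn_invFunOn hp).symm
  refine ⟨fun x => (Function.invFunOn Prod.fst S x).2, hH, ?_⟩
  ext p
  refine ⟨fun hp => ⟨mem_image_of_mem _ hp, hH p hp⟩, ?_⟩
  rintro ⟨⟨q, hq, hqp⟩, hp2⟩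
  rwa [show p = q from Prod.ext hqp.symm (hp2.trans (hqp ▸ (hH q hq).symm))]

lemma injOn_fst_of_abs_sub_le {E : Type*} [SeminormedAddGroup E] {S : Set (E × ℝ)} {K : ℝ}
    (hS : ∀ p ∈ S, ∀ q ∈ S, |p.2 - q.2| ≤ K * ‖p.1 - q.1‖) : InjOn Prod.fst S := by
  intro p hp q hq h
  have := hS p hp q hq
  rw [h, sub_self, norm_zero, mul_zero, abs_nonpos_iff, sub_eq_zero] at this
  exact Prod.ext h this

lemma exists_mem_Icc_abs_le {s t : ℝ} (hst : s ≤ t) :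
    ∃ τ ∈ Icc s t, |τ| ≤ |s| ∧ |τ| ≤ |t| := by
  rcases le_total 0 s with hs | hs
  · refine ⟨s, ⟨le_rfl, hst⟩, le_rfl, ?_⟩
    rwa [abs_of_nonneg hs, abs_of_nonneg (hs.trans hst)]
  rcases le_total t 0 with ht | ht
  · exact ⟨t, ⟨hst, le_rfl⟩, by rw [abs_of_nonpos ht, abs_of_nonpos hs]; linarith, le_rfl⟩
  · exact ⟨0, ⟨hs, ht⟩, by simp, by simp⟩

section Cylinder

variable {n : ℕ}

lemma isOpen_Qcyl (r : ℝ) (x : Spc n) (t : ℝ) : IsOpen (Qcyl n r x t) :=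
  isOpen_lt (by fun_prop) continuous_const

lemma eq_zero_of_mem_freeBdry {u : Spc n × ℝ → ℝ} {U : Set (Spc n × ℝ)} (hU : IsOpen U)
    (hu : ContinuousOn u U) {p : Spc n × ℝ} (hp : p ∈ freeBdry u U) : u p = 0 :=
  eq_zero_of_mem_frontier_setOf_pos (hu.continuousAt (hU.mem_nhds hp.1)) hp.2

lemma Qcyl_subset_Qcyl {r r' : ℝ} (h : r ≤ r') (x : Spc n) (t : ℝ) :
    Qcyl n r x t ⊆ Qcyl n r' x t :=
  fun _ hp => lt_of_lt_of_le hp h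

lemma mk_mem_Qcyl_of_abs_le {r : ℝ} {x : Spc n} {t τ : ℝ} (hx : (x, t) ∈ Qcyl n r 0 0)
    (hτ : |τ| ≤ |t|) : (x, τ) ∈ Qcyl n r 0 0 := by
  simp only [Qcyl, mem_ofPred_eq, sub_zero] at hx ⊢
  linarith [Real.sqrt_le_sqrt hτ]

lemma setOf_mk_mem_Qcyl (r : ℝ) (x₀ : Spc n) (t₀ τ : ℝ) :
    {z | (z, τ) ∈ Qcyl n r x₀ t₀} = ball x₀ (r - Real.sqrt |τ - t₀|) := by
  ext z
  simp only [Qcyl, mem_ofPred_eq, mem_ball, dist_eq_norm]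
  constructor <;> intro h <;> linarith

lemma abs_sub_le_of_norm_spGrad_le {r L : ℝ} {x₀ : Spc n} {t₀ : ℝ} {u : Spc n × ℝ → ℝ}
    (hgr : ∀ p ∈ Qcyl n r x₀ t₀, HasGradientAt (fun y => u (y, p.2)) (spGrad u p) p.1)
    (hbd : ∀ p ∈ Qcyl n r x₀ t₀, ‖spGrad u p‖ ≤ L) {x y : Spc n} {τ : ℝ}
    (hx : (x, τ) ∈ Qcyl n r x₀ t₀) (hy : (y, τ) ∈ Qcyl n r x₀ t₀) :
    |u (x, τ) - u (y, τ)| ≤ L * ‖x - y‖ := by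
  have hconv : Convex ℝ {z | (z, τ) ∈ Qcyl n r x₀ t₀} := by
    rw [setOf_mk_mem_Qcyl]
    exact convex_ball _ _
  have := hconv.norm_image_sub_le_of_norm_hasFDerivWithin_le (f := fun z => u (z, τ))
    (fun z hz => (hgr (z, τ) hz).hasFDerivAt.hasFDerivWithinAt)
    (fun z hz => by rw [LinearIsometryEquiv.norm_map]; exact hbd (z, τ) hz) hy hx
  rwa [← Real.norm_eq_abs]

variable {c L ρ : ℝ} {u : Spc n × ℝ → ℝ}

lemma mul_sub_le_mul_norm_sub (hρ1 : ρ < 1)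
    (hgr : ∀ p ∈ Qcyl n 1 0 0, HasGradientAt (fun y => u (y, p.2)) (spGrad u p) p.1)
    (hmono : ∀ (x : Spc n) (t₁ t₂ : ℝ), (x, t₁) ∈ Qcyl n 1 0 0 → (x, t₂) ∈ Qcyl n 1 0 0 →
      t₁ ≤ t₂ → c * (t₂ - t₁) ≤ u (x, t₂) - u (x, t₁))
    (hgradbd : ∀ p ∈ Qcyl n ρ 0 0, ‖spGrad u p‖ ≤ L)
    {x y : Spc n} {t s : ℝ} (hst : s ≤ t) (hx : (x, t) ∈ Qcyl n ρ 0 0)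
    (hy : (y, s) ∈ Qcyl n ρ 0 0) (hux : u (x, t) = 0) (huy : u (y, s) = 0) :
    c * (t - s) ≤ L * ‖x - y‖ := by
  obtain ⟨τ, ⟨hsτ, hτt⟩, hτs, hτt'⟩ := exists_mem_Icc_abs_le hst
  have hxτ := mk_mem_Qcyl_of_abs_le hx hτt'
  have hyτ := mk_mem_Qcyl_of_abs_le hy hτs
  have hsub := Qcyl_subset_Qcyl hρ1.le (0 : Spc n) 0
  have hup_x := hmono x τ t (hsub hxτ) (hsub hx) hτt
  have hup_y := hmono y s τ (hsub hy) (hsub hyτ) hsτ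
  have hacross := abs_sub_le_of_norm_spGrad_le
    (fun p hp => hgr p (hsub hp)) hgradbd hxτ hyτ
  linarith [neg_abs_le (u (x, τ) - u (y, τ))]

lemma abs_sub_le_div_mul_norm_sub_of_mem_freeBdry (hc : 0 < c) (hρ1 : ρ < 1)
    (hsol : IsStrongSolution u 1 (Qcyl n 1 0 0))
    (hmono : ∀ (x : Spc n) (t₁ t₂ : ℝ), (x, t₁) ∈ Qcyl n 1 0 0 → (x, t₂) ∈ Qcyl n 1 0 0 →
      t₁ ≤ t₂ → c * (t₂ - t₁) ≤ u (x, t₂) - u (x, t₁))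
    (hgradbd : ∀ p ∈ Qcyl n ρ 0 0, ‖spGrad u p‖ ≤ L) :
    ∀ p ∈ freeBdry u (Qcyl n 1 0 0) ∩ Qcyl n ρ 0 0,
      ∀ q ∈ freeBdry u (Qcyl n 1 0 0) ∩ Qcyl n ρ 0 0, |p.2 - q.2| ≤ (L / c) * ‖p.1 - q.1‖ := by
  have hzero : ∀ p ∈ freeBdry u (Qcyl n 1 0 0), u p = 0 := fun _ hp =>
    eq_zero_of_mem_freeBdry (isOpen_Qcyl 1 0 0) hsol.1 hp
  have key : ∀ p ∈ freeBdry u (Qcyl n 1 0 0) ∩ Qcyl n ρ 0 0,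
      ∀ q ∈ freeBdry u (Qcyl n 1 0 0) ∩ Qcyl n ρ 0 0, q.2 ≤ p.2 →
        c * (p.2 - q.2) ≤ L * ‖p.1 - q.1‖ :=
    fun p hp q hq hqp => mul_sub_le_mul_norm_sub hρ1 hsol.2.1 hmono hgradbd hqp hp.2 hq.2
      (hzero p hp.1) (hzero q hq.1)
  intro p hp q hq
  rw [div_mul_eq_mul_div, le_div_iff₀ hc, mul_comm]
  rcases le_total q.2 p.2 with h | h
  · rw [abs_of_nonneg (sub_nonneg.mpr h)]
    exact key p hp q hq h
  · rw [abs_sub_comm, abs_of_nonneg (sub_nonneg.mpr h), norm_sub_rev]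
    exact key q hq p hp h

end Cylinder

theorem stmt7_general (n : ℕ) (c L ρ : ℝ) (hc : 0 < c)
    (hρ1 : ρ < 1) (u : Spc n × ℝ → ℝ)
    (hsol : IsStrongSolution u 1 (Qcyl n 1 0 0))
    (hmono : ∀ (x : Spc n) (t₁ t₂ : ℝ), (x, t₁) ∈ Qcyl n 1 0 0 → (x, t₂) ∈ Qcyl n 1 0 0 →
      t₁ ≤ t₂ → c * (t₂ - t₁) ≤ u (x, t₂) - u (x, t₁))
    (hgradbd : ∀ p ∈ Qcyl n ρ 0 0, ‖spGrad u p‖ ≤ L) :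
    (∀ p q : Spc n × ℝ, p ∈ freeBdry u (Qcyl n 1 0 0) ∩ Qcyl n ρ 0 0 →
      q ∈ freeBdry u (Qcyl n 1 0 0) ∩ Qcyl n ρ 0 0 →
      |p.2 - q.2| ≤ (L / c) * ‖p.1 - q.1‖) ∧
    ∃ H : Spc n → ℝ,
      (∀ p ∈ freeBdry u (Qcyl n 1 0 0) ∩ Qcyl n ρ 0 0, p.2 = H p.1) ∧
      (∀ p q : Spc n × ℝ, p ∈ freeBdry u (Qcyl n 1 0 0) ∩ Qcyl n ρ 0 0 →
        q ∈ freeBdry u (Qcyl n 1 0 0) ∩ Qcyl n ρ 0 0 →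
        |H p.1 - H q.1| ≤ (L / c) * ‖p.1 - q.1‖) ∧
      freeBdry u (Qcyl n 1 0 0) ∩ Qcyl n ρ 0 0 =
        {p : Spc n × ℝ |
          p.1 ∈ Prod.fst '' (freeBdry u (Qcyl n 1 0 0) ∩ Qcyl n ρ 0 0) ∧ p.2 = H p.1} := by
  have hlip := abs_sub_le_div_mul_norm_sub_of_mem_freeBdry hc hρ1 hsol hmono hgradbd
  obtain ⟨H, hH, hgraph⟩ := (injOn_fst_of_abs_sub_le hlip).exists_eq_graph
  refine ⟨fun p q hp hq => hlip p hp q hq, H, hH, fun p q hp hq => ?_, hgraph⟩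
  rw [← hH p hp, ← hH q hq]
  exact hlip p hp q hq

/-- with `uₜ ≥ c` and `|∇u| ≤ L` on `Q_ρ`, the free boundary in `Q_ρ` is the
graph over the spatial variable of an `(L/c)`-Lipschitz function. -/
theorem stmt7 (n : ℕ) (hn : 1 ≤ n) (c L ρ : ℝ) (hc : 0 < c) (hL : 0 < L)
    (hρ0 : 0 < ρ) (hρ1 : ρ < 1) (u : Spc n × ℝ → ℝ)
    (hsol : IsStrongSolution u 1 (Qcyl n 1 0 0))
    (hmono : ∀ (x : Spc n) (t₁ t₂ : ℝ), (x, t₁) ∈ Qcyl n 1 0 0 → (x, t₂) ∈ Qcyl n 1 0 0 →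
      t₁ ≤ t₂ → c * (t₂ - t₁) ≤ u (x, t₂) - u (x, t₁))
    (hgradbd : ∀ p ∈ Qcyl n ρ 0 0, ‖spGrad u p‖ ≤ L) :
    (∀ p q : Spc n × ℝ, p ∈ freeBdry u (Qcyl n 1 0 0) ∩ Qcyl n ρ 0 0 →
      q ∈ freeBdry u (Qcyl n 1 0 0) ∩ Qcyl n ρ 0 0 →
      |p.2 - q.2| ≤ (L / c) * ‖p.1 - q.1‖) ∧
    ∃ H : Spc n → ℝ,
      (∀ p ∈ freeBdry u (Qcyl n 1 0 0) ∩ Qcyl n ρ 0 0, p.2 = H p.1) ∧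
      (∀ p q : Spc n × ℝ, p ∈ freeBdry u (Qcyl n 1 0 0) ∩ Qcyl n ρ 0 0 →
        q ∈ freeBdry u (Qcyl n 1 0 0) ∩ Qcyl n ρ 0 0 →
        |H p.1 - H q.1| ≤ (L / c) * ‖p.1 - q.1‖) ∧
      freeBdry u (Qcyl n 1 0 0) ∩ Qcyl n ρ 0 0 =
        {p : Spc n × ℝ |
          p.1 ∈ Prod.fst '' (freeBdry u (Qcyl n 1 0 0) ∩ Qcyl n ρ 0 0) ∧ p.2 = H p.1} :=
  stmt7_general n c L ρ hc hρ1 u hsol hmono hgradbd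
end
end

section
/- There is no function u : ℝ × ℝ → ℝ with the following properties: u is continuous with continuous spatial derivative ∂_x u on ℝ × (−∞, 0]; u is C^∞ on each of the open sets {u > 0} ∩ {t < 0} and {u < 0}, where it satisfies ∂_t u − ∂_{xx} u = 1 and ∂_t u − ∂_{xx} u = 0 respectively; there is C > 0 with sup_{Q_R} |u| ≤ C R² for all R > 0; u(x,t₂) − u(x,t₁) ≥ t₂ − t₁ for all x and t₁ ≤ t₂; for every t < 0 there is ρ(t) > 0 with {x : u(x,t) < 0} = (−ρ(t), ρ(t)); u(x,t) = u(−x,t) for all (x,t); u(x,t) ≥ 0 whenever t ≥ 0; and u(rx, r²t) = r² u(x,t) for all r > 0, x ∈ ℝ and t < 0. -/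
open Set Filter
open scoped NNReal Topology

noncomputable section

/-- Clamped linear ODE field for `y'' = (t/2) y' - y` (plus shift). -/
def odeF (M : ℝ) (t : ℝ) (a : ℝ × ℝ) : ℝ × ℝ :=
  (a.2, min M (max (-M) t) / 2 * a.2 - a.1)

lemma odeF_lip (M : ℝ) (hM : 0 ≤ M) (t : ℝ) :
    LipschitzWith (Real.toNNReal (M / 2 + 1)) (odeF M t) := by
  apply LipschitzWith.of_dist_le_mul
  intro p q
  have hcoe : ((Real.toNNReal (M / 2 + 1) : ℝ≥0) : ℝ) = M / 2 + 1 :=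
    Real.coe_toNNReal _ (by positivity)
  rw [hcoe]
  set c := min M (max (-M) t) with hc
  have hcabs : |c| ≤ M := by
    rw [abs_le]
    constructor
    · exact le_min (neg_le_self hM) (le_max_left _ _)
    · exact min_le_left _ _
  have hD1 : dist p.1 q.1 ≤ dist p q := by
    rw [Prod.dist_eq]; exact le_max_left _ _
  have hD2 : dist p.2 q.2 ≤ dist p q := by
    rw [Prod.dist_eq]; exact le_max_right _ _
  have hDnn : (0:ℝ) ≤ dist p q := dist_nonneg
  rw [odeF, odeF, Prod.dist_eq]
  apply max_le
  · calc dist p.2 q.2 ≤ dist p q := hD2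
      _ ≤ (M / 2 + 1) * dist p q := by nlinarith
  · rw [Real.dist_eq]
    have : c / 2 * p.2 - p.1 - (c / 2 * q.2 - q.1) = c / 2 * (p.2 - q.2) - (p.1 - q.1) := by ring
    rw [this]
    calc |c / 2 * (p.2 - q.2) - (p.1 - q.1)|
        ≤ |c / 2 * (p.2 - q.2)| + |p.1 - q.1| := abs_sub _ _
      _ = |c| / 2 * |p.2 - q.2| + |p.1 - q.1| := by
          rw [abs_mul, abs_div, abs_two]
      _ ≤ M / 2 * dist p q + dist p q := by
          have h2 : |p.2 - q.2| ≤ dist p q := by rw [← Real.dist_eq]; exact hD2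
          have h1 : |p.1 - q.1| ≤ dist p q := by rw [← Real.dist_eq]; exact hD1
          have habs2 : (0:ℝ) ≤ |p.2 - q.2| := abs_nonneg _
          nlinarith [abs_nonneg (p.2 - q.2)]
      _ = (M / 2 + 1) * dist p q := by ring



lemma ode_unique {c ρ : ℝ} (hρ : 0 < ρ) {h h' : ℝ → ℝ}
    (hd : ∀ ξ, HasDerivAt h (h' ξ) ξ)
    (hd' : ∀ ξ ∈ Ioo (-ρ) ρ, HasDerivAt h' (ξ / 2 * h' ξ - h ξ) ξ)
    (h0 : h 0 = -c) (h0' : h' 0 = 0) :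
    ∀ ξ ∈ Ioo (-ρ) ρ, h ξ = c / 2 * ξ ^ 2 - c := by
  set M : ℝ := max 2 ρ with hMdef
  have hM : (0:ℝ) ≤ M := le_trans (by norm_num) (le_max_left _ _)
  have hρM : ρ ≤ M := le_max_right _ _
  have hclamp : ∀ t ∈ Ioo (-ρ) ρ, min M (max (-M) t) = t := by
    intro t ht
    rw [max_eq_right, min_eq_right]
    · exact le_trans ht.2.le hρM
    · exact le_trans (neg_le_neg hρM) ht.1.le
  have hv : ∀ t, LipschitzOnWith (Real.toNNReal (M / 2 + 1)) (odeF M t)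
      ((fun _ => (univ : Set (ℝ × ℝ))) t) :=
    fun t => (odeF_lip M hM t).lipschitzOnWith
  have h0mem : (0:ℝ) ∈ Ioo (-ρ) ρ := ⟨neg_lt_zero.2 hρ, hρ⟩
  have hgd : ∀ t : ℝ, HasDerivAt (fun ξ : ℝ => c / 2 * ξ ^ 2 - c) (c * t) t := by
    intro t
    have := ((hasDerivAt_pow 2 t).const_mul (c / 2)).sub_const c
    refine this.congr_deriv ?_
    simp
    ring
  have key : EqOn (fun ξ => (h ξ, h' ξ)) (fun ξ => (c / 2 * ξ ^ 2 - c, c * ξ)) (Ioo (-ρ) ρ) := by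
    apply ODE_solution_unique_of_mem_Ioo (fun t _ => hv t) h0mem
    · intro t ht
      refine ⟨?_, trivial⟩
      have : odeF M t (h t, h' t) = (h' t, t / 2 * h' t - h t) := by
        simp only [odeF, hclamp t ht]
      rw [this]
      exact (hd t).prodMk (hd' t ht)
    · intro t ht
      refine ⟨?_, trivial⟩
      have : odeF M t (c / 2 * t ^ 2 - c, c * t) = (c * t, t / 2 * (c * t) - (c / 2 * t ^ 2 - c)) := by
        simp only [odeF, hclamp t ht]
      rw [this]
      refine (hgd t).prodMk ?_
      have := (hasDerivAt_id t).const_mul c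
      refine this.congr_deriv ?_
      · ring
    · simp [h0, h0']
  intro ξ hξ
  have := key hξ
  exact congrArg Prod.fst this


lemma eq_at_right_endpoint {f g : ℝ → ℝ} {a b : ℝ} (hab : a < b)
    (hf : ContinuousAt f b) (hg : ContinuousAt g b)
    (heq : ∀ x ∈ Ioo a b, f x = g x) : f b = g b := by
  have hne : (𝓝[Ioo a b] b).NeBot := by
    rw [← mem_closure_iff_nhdsWithin_neBot, closure_Ioo hab.ne]
    exact right_mem_Icc.2 hab.le
  have h1 : Tendsto f (𝓝[Ioo a b] b) (𝓝 (f b)) := hf.continuousWithinAt.tendsto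
  have h2 : Tendsto f (𝓝[Ioo a b] b) (𝓝 (g b)) := by
    refine Tendsto.congr' ?_ hg.continuousWithinAt.tendsto
    filter_upwards [self_mem_nhdsWithin] with x hx
    exact (heq x hx).symm
  exact tendsto_nhds_unique h1 h2

lemma eq_at_left_endpoint {f g : ℝ → ℝ} {a b : ℝ} (hab : a < b)
    (hf : ContinuousAt f a) (hg : ContinuousAt g a)
    (heq : ∀ x ∈ Ioo a b, f x = g x) : f a = g a := by
  have hne : (𝓝[Ioo a b] a).NeBot := by
    rw [← mem_closure_iff_nhdsWithin_neBot, closure_Ioo hab.ne]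
    exact left_mem_Icc.2 hab.le
  have h1 : Tendsto f (𝓝[Ioo a b] a) (𝓝 (f a)) := hf.continuousWithinAt.tendsto
  have h2 : Tendsto f (𝓝[Ioo a b] a) (𝓝 (g a)) := by
    refine Tendsto.congr' ?_ hg.continuousWithinAt.tendsto
    filter_upwards [self_mem_nhdsWithin] with x hx
    exact (heq x hx).symm
  exact tendsto_nhds_unique h1 h2

lemma partD {c : ℝ} (hc : 0 < c) {h h1 : ℝ → ℝ}
    (hcont : Continuous h) (hcont1 : Continuous h1)
    (hd : ∀ ξ, HasDerivAt h (h1 ξ) ξ)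
    (hd1 : ∀ ξ ∈ Ioi (Real.sqrt 2), HasDerivAt h1 (ξ / 2 * h1 ξ - h ξ - 1) ξ)
    (hb : h (Real.sqrt 2) = 0) (hb1 : h1 (Real.sqrt 2) = c * Real.sqrt 2)
    (hpos : ∀ ξ, Real.sqrt 2 < ξ → 0 < h ξ) : False := by
  have hs2 : Real.sqrt 2 ^ 2 = 2 := Real.sq_sqrt (by norm_num)
  have hs2pos : 0 < Real.sqrt 2 := Real.sqrt_pos.2 two_pos
  have hs2lt2 : Real.sqrt 2 < 2 := by nlinarith [hs2, hs2pos]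
  set P : ℝ → ℝ := fun ξ => ξ ^ 2 - 2 with hP
  set H : ℝ → ℝ := fun ξ => h ξ + 1 - c / 2 * P ξ with hH
  set H1 : ℝ → ℝ := fun ξ => h1 ξ - c * ξ with hH1
  set W : ℝ → ℝ := fun ξ => H1 ξ * P ξ - H ξ * (2 * ξ) with hW
  set V : ℝ → ℝ := fun ξ => W ξ * Real.exp (-(ξ ^ 2 / 4)) with hV
  have hPd : ∀ ξ : ℝ, HasDerivAt P (2 * ξ) ξ := by
    intro ξ
    have := (hasDerivAt_pow 2 ξ).sub_const 2
    refine this.congr_deriv ?_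
    simp
  have hPpos : ∀ ξ, Real.sqrt 2 < ξ → 0 < P ξ := by
    intro ξ hξ
    have : Real.sqrt 2 ^ 2 < ξ ^ 2 := by
      apply pow_lt_pow_left₀ hξ (Real.sqrt_nonneg 2) (by norm_num)
    simp only [hP]
    nlinarith [hs2]
  have hcontH : Continuous H := by fun_prop
  have hcontH1 : Continuous H1 := by fun_prop
  have hcontW : Continuous W := by fun_prop
  have hcontV : Continuous V := by fun_prop
  have hHd : ∀ ξ : ℝ, HasDerivAt H (H1 ξ) ξ := by
    intro ξ
    have := ((hd ξ).add_const 1).sub ((hPd ξ).const_mul (c / 2))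
    refine this.congr_deriv ?_
    simp only [hH1]
    ring
  have hH1d : ∀ ξ ∈ Ioi (Real.sqrt 2), HasDerivAt H1 (ξ / 2 * H1 ξ - H ξ) ξ := by
    intro ξ hξ
    have := (hd1 ξ hξ).sub ((hasDerivAt_id ξ).const_mul c)
    refine this.congr_deriv ?_
    simp only [hH, hH1, hP]
    ring
  have hWd : ∀ ξ ∈ Ioi (Real.sqrt 2), HasDerivAt W (ξ / 2 * W ξ) ξ := by
    intro ξ hξ
    have h2ξ : HasDerivAt (fun y : ℝ => 2 * y) 2 ξ := by
      simpa using (hasDerivAt_id ξ).const_mul 2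
    have := ((hH1d ξ hξ).mul (hPd ξ)).sub ((hHd ξ).mul h2ξ)
    refine this.congr_deriv ?_
    simp only [hW, hH, hH1, hP]
    ring
  have hVd : ∀ ξ ∈ Ioi (Real.sqrt 2), HasDerivAt V 0 ξ := by
    intro ξ hξ
    have he : HasDerivAt (fun y : ℝ => Real.exp (-(y ^ 2 / 4)))
        (Real.exp (-(ξ ^ 2 / 4)) * (-(2 * ξ / 4))) ξ := by
      have hin : HasDerivAt (fun y : ℝ => -(y ^ 2 / 4)) (-(2 * ξ / 4)) ξ := by
        have := ((hasDerivAt_pow 2 ξ).div_const 4).neg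
        refine this.congr_deriv ?_
        simp
      exact hin.exp
    have := (hWd ξ hξ).mul he
    refine this.congr_deriv ?_
    ring
  have hVc : ∀ a b : ℝ, Real.sqrt 2 < a → a ≤ b → V b = V a := by
    intro a b ha hab
    have key := constant_of_has_deriv_right_zero (f := V) (a := a) (b := b)
      hcontV.continuousOn (fun x hx => (hVd x (lt_of_lt_of_le ha hx.1)).hasDerivWithinAt)
    exact key b (right_mem_Icc.2 hab)
  have hVval : ∀ ξ, Real.sqrt 2 < ξ → V ξ = V (Real.sqrt 2) := by
    intro ξ hξ
    have := eq_at_left_endpoint (f := V) (g := fun _ => V ξ) hξ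
      hcontV.continuousAt continuousAt_const
      (fun x hx => (hVc x ξ hx.1 hx.2.le).symm)
    exact this.symm
  have hV2 : V (Real.sqrt 2) = -(2 * Real.sqrt 2) * Real.exp (-(1 / 2)) := by
    simp only [hV, hW, hH, hH1, hP, hb, hb1, hs2]
    norm_num
  have hWval : ∀ ξ, Real.sqrt 2 < ξ → W ξ = -(2 * Real.sqrt 2) * Real.exp (ξ ^ 2 / 4 - 1 / 2) := by
    intro ξ hξ
    have h1' := hVval ξ hξ
    rw [hV2] at h1'
    have h2' : W ξ * Real.exp (-(ξ ^ 2 / 4)) = -(2 * Real.sqrt 2) * Real.exp (-(1 / 2)) := h1'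
    have h3' : W ξ * Real.exp (-(ξ ^ 2 / 4)) * Real.exp (ξ ^ 2 / 4)
        = -(2 * Real.sqrt 2) * Real.exp (-(1 / 2)) * Real.exp (ξ ^ 2 / 4) := by rw [h2']
    rw [mul_assoc, ← Real.exp_add] at h3'
    simp only [neg_add_cancel, Real.exp_zero, mul_one] at h3'
    rw [h3', mul_assoc, ← Real.exp_add]
    ring_nf
  have hWbound : ∀ ξ : ℝ, 2 ≤ ξ → W ξ ≤ -(Real.sqrt 2 / 432) * P ξ ^ 2 := by
    intro ξ hξ2
    set y : ℝ := ξ ^ 2 / 4 - 1 / 2 with hy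
    have hξ4 : 4 ≤ ξ ^ 2 := by nlinarith
    have hynn : 0 ≤ y := by simp only [hy]; linarith
    have e1 : y / 3 ≤ Real.exp (y / 3) := by
      have := Real.add_one_le_exp (y / 3)
      linarith
    have e2 : (y / 3) ^ 3 ≤ Real.exp (y / 3) ^ 3 :=
      pow_le_pow_left₀ (by positivity) e1 3
    have e3 : Real.exp (y / 3) ^ 3 = Real.exp y := by
      rw [← Real.exp_nat_mul]
      congr 1
      push_cast
      ring
    have ecube : (y / 3) ^ 3 ≤ Real.exp y := by rw [← e3]; exact e2
    have hWv : W ξ = -(2 * Real.sqrt 2) * Real.exp y := by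
      rw [hWval ξ (lt_of_lt_of_le hs2lt2 hξ2)]
    have hPval : P ξ = ξ ^ 2 - 2 := rfl
    -- here y = (ξ²-2)/4, so (y/3)^3 = (ξ²-2)^3 / 1728
    have hy' : y = P ξ / 4 := by simp only [hy, hPval]; ring
    have hP2 : 2 ≤ P ξ := by simp only [hPval]; linarith
    rw [hWv]
    have h4 : (P ξ / 12) ^ 3 ≤ Real.exp y := by
      have : (y / 3) ^ 3 = (P ξ / 12) ^ 3 := by rw [hy']; ring
      linarith [ecube, this.symm.le]
    have m1 : 2 * Real.sqrt 2 * (P ξ / 12) ^ 3 ≤ 2 * Real.sqrt 2 * Real.exp y :=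
      mul_le_mul_of_nonneg_left h4 (by positivity)
    have m2 : Real.sqrt 2 / 432 * P ξ ^ 2 ≤ 2 * Real.sqrt 2 * (P ξ / 12) ^ 3 := by
      have hdiff : 2 * Real.sqrt 2 * (P ξ / 12) ^ 3 - Real.sqrt 2 / 432 * P ξ ^ 2
          = Real.sqrt 2 * (P ξ ^ 2 * (P ξ - 2)) / 864 := by ring
      have hnn : 0 ≤ Real.sqrt 2 * (P ξ ^ 2 * (P ξ - 2)) / 864 :=
        div_nonneg (mul_nonneg (Real.sqrt_nonneg 2)
          (mul_nonneg (sq_nonneg _) (by linarith))) (by norm_num)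
      linarith [hdiff, hnn]
    linarith [m1, m2]
  -- the quotient function
  set K : ℝ := Real.sqrt 2 / 432 with hK
  have hKpos : 0 < K := by positivity
  set φ : ℝ → ℝ := fun ξ => H ξ / P ξ + K * ξ with hφ
  have hφd : ∀ ξ, Real.sqrt 2 < ξ → HasDerivAt φ (W ξ / P ξ ^ 2 + K) ξ := by
    intro ξ hξ
    have hPne : P ξ ≠ 0 := ne_of_gt (hPpos ξ hξ)
    have hdiv := (hHd ξ).div (hPd ξ) hPne
    have hlin : HasDerivAt (fun y : ℝ => K * y) K ξ := by
      simpa using (hasDerivAt_id ξ).const_mul K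
    have := hdiv.add hlin
    exact this.congr_deriv rfl
  have hanti : AntitoneOn φ (Ici (2 : ℝ)) := by
    apply antitoneOn_of_deriv_nonpos (convex_Ici 2)
    · exact fun x hx => (hφd x (lt_of_lt_of_le hs2lt2 hx)).continuousAt.continuousWithinAt
    · intro x hx
      rw [interior_Ici] at hx
      exact ((hφd x (hs2lt2.trans hx)).differentiableAt).differentiableWithinAt
    · intro x hx
      rw [interior_Ici] at hx
      have hds := hφd x (hs2lt2.trans hx)
      rw [hds.deriv]
      have hPx : 0 < P x := hPpos x (hs2lt2.trans hx)
      have hWb := hWbound x hx.le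
      have : W x / P x ^ 2 ≤ -K := by
        rw [div_le_iff₀ (by positivity)]
        calc W x ≤ -(Real.sqrt 2 / 432) * P x ^ 2 := hWb
          _ = -K * P x ^ 2 := by rw [hK]
      linarith
  -- choose a large point
  set Z : ℝ := max 3 (2 + (φ 2 + c / 2 + 1) / K) with hZ
  have hZ3 : (3 : ℝ) ≤ Z := le_max_left _ _
  have hZ2 : (2 : ℝ) ≤ Z := by linarith
  have hZs2 : Real.sqrt 2 < Z := by linarith
  have hZbig : 2 + (φ 2 + c / 2 + 1) / K ≤ Z := le_max_right _ _
  have hφZ : φ Z ≤ φ 2 := hanti (self_mem_Ici) hZ2 hZ2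
  have hPZ : 0 < P Z := hPpos Z hZs2
  have hHPZ : H Z / P Z ≤ -(c / 2) - 1 := by
    have h1' : K * (2 + (φ 2 + c / 2 + 1) / K) ≤ K * Z :=
      mul_le_mul_of_nonneg_left hZbig hKpos.le
    rw [mul_add] at h1'
    have h2' : K * ((φ 2 + c / 2 + 1) / K) = φ 2 + c / 2 + 1 := by
      field_simp
    have h3' : H Z / P Z = φ Z - K * Z := by simp only [hφ]; ring
    rw [h3']
    clear_value K φ Z
    linarith [hφZ, hKpos, h1', h2']
  have hHZ : H Z ≤ (-(c / 2) - 1) * P Z := by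
    have := (div_le_iff₀ hPZ).1 hHPZ
    linarith [this]
  have hhZ : h Z = H Z - 1 + c / 2 * P Z := by simp only [hH]; ring
  have hposZ : 0 < h Z := hpos Z hZs2
  have hexpand : (-(c / 2) - 1) * P Z = -(c / 2 * P Z) - P Z := by ring
  clear_value K φ Z P H
  linarith [hHZ, hPZ, hposZ, hhZ, hexpand]



/-- One-dimensional parabolic cylinder `Q_r` centered at the origin. -/
def Q1d (r : ℝ) : Set (ℝ × ℝ) := {p : ℝ × ℝ | |p.1| + Real.sqrt |p.2| < r}

/-- Time derivative `∂ₜ u`. -/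
def ut (u : ℝ × ℝ → ℝ) (p : ℝ × ℝ) : ℝ := deriv (fun s => u (p.1, s)) p.2

/-- Spatial derivative `∂ₓ u`. -/
def ux (u : ℝ × ℝ → ℝ) (p : ℝ × ℝ) : ℝ := deriv (fun y => u (y, p.2)) p.1

/-- Second spatial derivative `∂ₓₓ u`. -/
def uxx (u : ℝ × ℝ → ℝ) (p : ℝ × ℝ) : ℝ := deriv (fun y => ux u (y, p.2)) p.1

/-- nonexistence, in one spatial dimension, of a parabolically
`2`-homogeneous solution of `∂ₜu - ∂ₓₓu = χ_{u>0}` whose negativity set at each negative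
time is a nonempty symmetric interval and which is nonnegative for `t ≥ 0`. -/
theorem stmt17 :
    ¬ ∃ u : ℝ × ℝ → ℝ,
      ContinuousOn u ((univ : Set ℝ) ×ˢ Iic (0 : ℝ)) ∧
      (∀ p ∈ (univ : Set ℝ) ×ˢ Iic (0 : ℝ),
        HasDerivAt (fun y => u (y, p.2)) (ux u p) p.1) ∧
      ContinuousOn (ux u) ((univ : Set ℝ) ×ˢ Iic (0 : ℝ)) ∧
      ContDiffOn ℝ (⊤ : ℕ∞) u {p : ℝ × ℝ | 0 < u p ∧ p.2 < 0} ∧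
      (∀ p : ℝ × ℝ, 0 < u p → p.2 < 0 → ut u p - uxx u p = 1) ∧
      ContDiffOn ℝ (⊤ : ℕ∞) u {p : ℝ × ℝ | u p < 0} ∧
      (∀ p : ℝ × ℝ, u p < 0 → ut u p - uxx u p = 0) ∧
      (∃ C > 0, ∀ R : ℝ, 0 < R → ∀ p ∈ Q1d R, |u p| ≤ C * R ^ 2) ∧
      (∀ x t₁ t₂ : ℝ, t₁ ≤ t₂ → t₂ - t₁ ≤ u (x, t₂) - u (x, t₁)) ∧
      (∀ t : ℝ, t < 0 → ∃ ρ > 0, {x : ℝ | u (x, t) < 0} = Ioo (-ρ) ρ) ∧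
      (∀ x t : ℝ, u (x, t) = u (-x, t)) ∧
      (∀ x t : ℝ, 0 ≤ t → 0 ≤ u (x, t)) ∧
      (∀ r : ℝ, 0 < r → ∀ x t : ℝ, t < 0 → u (r * x, r ^ 2 * t) = r ^ 2 * u (x, t)) := by
  rintro ⟨u, hu1, hu2, hu3, hu4, hu5, hu6, hu7, -, hu9, hu10, hu11, hu12, hu13⟩
  -- the time slice at t = -1
  set h : ℝ → ℝ := fun y => u (y, -1) with hhdef
  obtain ⟨ρ, hρpos, hset⟩ := hu10 (-1) (by norm_num)
  -- membership of slice points in the continuity domain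
  have hmemIic : ∀ y : ℝ, ((y, (-1:ℝ)) : ℝ × ℝ) ∈ (univ : Set ℝ) ×ˢ Iic (0:ℝ) := by
    intro y; exact ⟨trivial, by norm_num⟩
  have hnhds : ∀ y : ℝ, ((univ : Set ℝ) ×ˢ Iic (0:ℝ)) ∈ 𝓝 ((y, (-1:ℝ)) : ℝ × ℝ) := by
    intro y
    have hopen : IsOpen ((univ : Set ℝ) ×ˢ Iio (0:ℝ)) := isOpen_univ.prod isOpen_Iio
    refine mem_nhds_iff.2 ⟨(univ : Set ℝ) ×ˢ Iio (0:ℝ), ?_, hopen, ⟨trivial, by norm_num⟩⟩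
    exact prod_mono subset_rfl Iio_subset_Iic_self
  -- h has derivative everywhere
  have hder : ∀ y : ℝ, HasDerivAt h (ux u (y, -1)) y := by
    intro y
    exact hu2 ((y : ℝ), (-1:ℝ)) (hmemIic y)
  have hderiv_h : ∀ y : ℝ, deriv h y = ux u (y, -1) := fun y => (hder y).deriv
  -- continuity of h and of its derivative
  have hcont_h : Continuous h := by
    rw [continuous_iff_continuousAt]
    intro y
    have hm : ContinuousAt (fun y : ℝ => ((y, (-1:ℝ)) : ℝ × ℝ)) y := by fun_prop
    exact ContinuousAt.comp (hu1.continuousAt (hnhds y)) hm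
  have hcont_h' : Continuous (fun y : ℝ => ux u (y, -1)) := by
    rw [continuous_iff_continuousAt]
    intro y
    have hm : ContinuousAt (fun y : ℝ => ((y, (-1:ℝ)) : ℝ × ℝ)) y := by fun_prop
    exact ContinuousAt.comp (g := ux u) (f := fun y : ℝ => ((y, (-1:ℝ)) : ℝ × ℝ)) (x := y)
      (hu3.continuousAt (hnhds y)) hm
  -- c and its positivity
  set c : ℝ := -u (0, -1) with hcdef
  have hczero : (0:ℝ) ∈ {x : ℝ | u (x, -1) < 0} := by
    rw [hset]; exact ⟨neg_lt_zero.2 hρpos, hρpos⟩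
  have hcpos : 0 < c := by
    have : u (0, -1) < 0 := hczero
    simp only [hcdef]; linarith

  -- spatial derivative slice
  set h1 : ℝ → ℝ := fun y => ux u (y, -1) with hh1def
  have hder1 : ∀ y : ℝ, HasDerivAt h (h1 y) y := hder
  -- homogeneity in slice form
  have hhom : ∀ s : ℝ, s < 0 → ∀ x : ℝ, u (x, s) = (-s) * h (x * (Real.sqrt (-s))⁻¹) := by
    intro s hs x
    have hrpos : 0 < Real.sqrt (-s) := Real.sqrt_pos.2 (by linarith)
    have hsq : (Real.sqrt (-s)) ^ 2 = -s := Real.sq_sqrt (by linarith)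
    have key := hu13 (Real.sqrt (-s)) hrpos (x * (Real.sqrt (-s))⁻¹) (-1) (by norm_num)
    rw [hsq] at key
    have hx : Real.sqrt (-s) * (x * (Real.sqrt (-s))⁻¹) = x := by
      field_simp
    have hs2 : (-s) * (-1) = s := by ring
    rw [hx, hs2] at key
    exact key
  -- the time derivative of u on the slice, via homogeneity
  have hut : ∀ ξ : ℝ, ut u (ξ, -1) = ξ / 2 * h1 ξ - h ξ := by
    intro ξ
    have hev : (fun s : ℝ => u (ξ, s)) =ᶠ[𝓝 (-1 : ℝ)]
        (fun s : ℝ => (-s) * h (ξ * (Real.sqrt (-s))⁻¹)) := by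
      filter_upwards [Iio_mem_nhds (show (-1:ℝ) < 0 by norm_num)] with s hs
      exact hhom s hs ξ
    have hs1 : HasDerivAt (fun s : ℝ => -s) (-1 : ℝ) (-1 : ℝ) := (hasDerivAt_id (-1:ℝ)).neg
    have hs2 : HasDerivAt (fun s : ℝ => Real.sqrt (-s)) (-(1/2) : ℝ) (-1 : ℝ) := by
      have hsq : HasDerivAt Real.sqrt (1 / (2 * Real.sqrt (-(-1:ℝ)))) (-(-1:ℝ)) :=
        Real.hasDerivAt_sqrt (by norm_num)
      have := HasDerivAt.comp (-1:ℝ) hsq hs1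
      refine this.congr_deriv ?_
      norm_num [Real.sqrt_one]
    have hs3 : HasDerivAt (fun s : ℝ => (Real.sqrt (-s))⁻¹) ((1:ℝ)/2) (-1 : ℝ) := by
      have hne : Real.sqrt (-(-1:ℝ)) ≠ 0 := by norm_num [Real.sqrt_one]
      have := hs2.inv hne
      refine this.congr_deriv ?_
      norm_num [Real.sqrt_one]
    have hs4 : HasDerivAt (fun s : ℝ => ξ * (Real.sqrt (-s))⁻¹) (ξ * (1/2)) (-1 : ℝ) :=
      hs3.const_mul ξ
    have hpt : ξ * (Real.sqrt (-(-1:ℝ)))⁻¹ = ξ := by norm_num [Real.sqrt_one]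
    have hg : HasDerivAt h (h1 ξ) ((fun s : ℝ => ξ * (Real.sqrt (-s))⁻¹) (-1)) := by
      show HasDerivAt h (h1 ξ) (ξ * (Real.sqrt (-(-1:ℝ)))⁻¹)
      rw [hpt]
      exact hder1 ξ
    have hs5 : HasDerivAt (fun s : ℝ => h (ξ * (Real.sqrt (-s))⁻¹)) (h1 ξ * (ξ * (1/2))) (-1:ℝ) :=
      HasDerivAt.comp (h₂ := h) (h₂' := h1 ξ) (-1:ℝ) hg hs4
    have hs6 : HasDerivAt (fun s : ℝ => (-s) * h (ξ * (Real.sqrt (-s))⁻¹))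
        (ξ / 2 * h1 ξ - h ξ) (-1 : ℝ) := by
      have := hs1.mul hs5
      refine this.congr_deriv ?_
      have hv : h (ξ * (Real.sqrt (-(-1:ℝ)))⁻¹) = h ξ := by rw [hpt]
      rw [hv]
      ring
    have : ut u (ξ, -1) = deriv (fun s : ℝ => u (ξ, s)) (-1 : ℝ) := rfl
    rw [this, hev.deriv_eq, hs6.deriv]
  -- the first spatial derivative vanishes at the origin (evenness)
  have heven0 : h1 0 = 0 := by
    have hneg : ∀ y : ℝ, h (-y) = h y := by
      intro y
      have := hu11 (-y) (-1)
      show u (-y, -1) = u (y, -1)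
      simpa using this
    have hg : HasDerivAt h (h1 0) (-(0:ℝ)) := by rw [neg_zero]; exact hder1 0
    have h2 : HasDerivAt (fun y : ℝ => h (-y)) (h1 0 * (-1)) 0 :=
      HasDerivAt.comp 0 hg (hasDerivAt_neg 0)
    have hfun : (fun y : ℝ => h (-y)) = h := funext hneg
    rw [hfun] at h2
    have := (hder1 0).unique h2
    linarith
  -- second spatial derivatives on open slices where u is smooth
  have hsecond : ∀ S : Set (ℝ × ℝ), ContDiffOn ℝ (⊤ : ℕ∞) u S → ∀ I : Set ℝ, IsOpen I →
      (∀ y ∈ I, ((y, (-1:ℝ)) : ℝ × ℝ) ∈ S) → ∀ ξ ∈ I, HasDerivAt h1 (deriv h1 ξ) ξ := by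
    intro S hS I hI hmap ξ hξ
    have hemb : ContDiffOn ℝ (⊤ : ℕ∞) (fun y : ℝ => ((y, (-1:ℝ)) : ℝ × ℝ)) I :=
      (contDiff_id.prodMk contDiff_const).contDiffOn
    have hcd : ContDiffOn ℝ (⊤ : ℕ∞) h I := hS.comp hemb (fun y hy => hmap y hy)
    have hd1 : ContDiffOn ℝ (⊤ : ℕ∞) (deriv h) I := hcd.deriv_of_isOpen hI (by simp)
    have hdiff : DifferentiableAt ℝ (deriv h) ξ :=
      (hd1.differentiableOn (by simp)).differentiableAt (hI.mem_nhds hξ)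
    have hfun : deriv h = h1 := funext fun y => (hder1 y).deriv
    rw [← hfun]
    exact hdiff.hasDerivAt
  -- the interior ODE
  have hODEin : ∀ ξ ∈ Ioo (-ρ) ρ, HasDerivAt h1 (ξ / 2 * h1 ξ - h ξ) ξ := by
    intro ξ hξ
    have hneg : u (ξ, -1) < 0 := by
      have : ξ ∈ {x : ℝ | u (x, -1) < 0} := by rw [hset]; exact hξ
      exact this
    have hD := hsecond _ hu6 (Ioo (-ρ) ρ) isOpen_Ioo
      (fun y hy => show u (y, -1) < 0 from by
        have : y ∈ {x : ℝ | u (x, -1) < 0} := by rw [hset]; exact hy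
        exact this) ξ hξ
    have hpde := hu7 (ξ, -1) hneg
    have hkey : deriv h1 ξ = ξ / 2 * h1 ξ - h ξ := by
      have h2 := hut ξ
      have h3 : uxx u (ξ, -1) = deriv h1 ξ := rfl
      rw [← h3]
      linarith [hpde, h2]
    rw [← hkey]
    exact hD
  -- by ODE uniqueness, h is the explicit parabola inside
  have hEq : ∀ ξ ∈ Ioo (-ρ) ρ, h ξ = c / 2 * ξ ^ 2 - c :=
    ode_unique hρpos hder1 hODEin (by rw [hcdef, neg_neg]) heven0
  have hpar : Continuous (fun y : ℝ => c / 2 * y ^ 2 - c) := by fun_prop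
  have hlin : Continuous (fun y : ℝ => c * y) := by fun_prop
  have hEq' : ∀ ξ ∈ Ioo (-ρ) ρ, h1 ξ = c * ξ := by
    intro ξ hξ
    have hev : h =ᶠ[𝓝 ξ] (fun y : ℝ => c / 2 * y ^ 2 - c) := by
      filter_upwards [isOpen_Ioo.mem_nhds hξ] with y hy using hEq y hy
    have e1 : deriv h ξ = deriv (fun y : ℝ => c / 2 * y ^ 2 - c) ξ := hev.deriv_eq
    have e2 : deriv h ξ = h1 ξ := (hder1 ξ).deriv
    have e3 : HasDerivAt (fun y : ℝ => c / 2 * y ^ 2 - c) (c * ξ) ξ := by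
      have := ((hasDerivAt_pow 2 ξ).const_mul (c / 2)).sub_const c
      refine this.congr_deriv ?_
      simp
      ring
    rw [← e2, e1, e3.deriv]
  -- the interface is at √2
  have hs2 : Real.sqrt 2 ^ 2 = 2 := Real.sq_sqrt (by norm_num)
  have hs2pos : 0 < Real.sqrt 2 := Real.sqrt_pos.2 two_pos
  have hρle : ρ ≤ Real.sqrt 2 := by
    by_contra hcon
    push_neg at hcon
    have hmem : Real.sqrt 2 ∈ Ioo (-ρ) ρ := ⟨by linarith, hcon⟩
    have h0 := hEq _ hmem
    rw [hs2] at h0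
    have hneg : Real.sqrt 2 ∈ {x : ℝ | u (x, -1) < 0} := by rw [hset]; exact hmem
    have : h (Real.sqrt 2) < 0 := hneg
    linarith
  have hvρ : h ρ = c / 2 * ρ ^ 2 - c :=
    eq_at_right_endpoint (by linarith) hcont_h.continuousAt hpar.continuousAt hEq
  have hρnonneg : 0 ≤ h ρ := by
    by_contra hcon
    push_neg at hcon
    have : ρ ∈ Ioo (-ρ) ρ := by rw [← hset]; exact hcon
    simp at this
  have hρsq : ρ ^ 2 = 2 := by
    have h1le : ρ ^ 2 ≤ 2 := by nlinarith [hρle, hρpos, hs2]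
    nlinarith [hvρ, hρnonneg, hcpos]
  have hρeq : ρ = Real.sqrt 2 := by
    rw [← Real.sqrt_sq hρpos.le, hρsq]
  have hb : h (Real.sqrt 2) = 0 := by
    rw [← hρeq, hvρ, hρsq]
    ring
  have hb1 : h1 (Real.sqrt 2) = c * Real.sqrt 2 := by
    rw [← hρeq]
    exact eq_at_right_endpoint (by linarith) hcont_h'.continuousAt hlin.continuousAt hEq'
  -- u is positive on the slice beyond √2
  have hpos : ∀ ξ : ℝ, Real.sqrt 2 < ξ → 0 < h ξ := by
    intro ξ hξ
    have hξpos : 0 < ξ := lt_trans hs2pos hξ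
    have hξsq : 2 < ξ ^ 2 := by nlinarith [hs2]
    have ht0 : -(ξ ^ 2 / 2) < 0 := by nlinarith
    have hu0 : u (ξ, -(ξ ^ 2 / 2)) = 0 := by
      rw [hhom _ ht0 ξ]
      have hss : Real.sqrt (-(-(ξ ^ 2 / 2))) = ξ / Real.sqrt 2 := by
        rw [neg_neg, show ξ ^ 2 / 2 = (ξ / Real.sqrt 2) ^ 2 by rw [div_pow, hs2]]
        exact Real.sqrt_sq (by positivity)
      rw [hss, show ξ * (ξ / Real.sqrt 2)⁻¹ = Real.sqrt 2 by field_simp, hb, mul_zero]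
    have hmono := hu9 ξ (-(ξ ^ 2 / 2)) (-1) (by nlinarith)
    rw [hu0, sub_zero] at hmono
    have hhξ : h ξ = u (ξ, -1) := rfl
    rw [hhξ]
    linarith
  -- the exterior ODE
  have hODEout : ∀ ξ ∈ Ioi (Real.sqrt 2), HasDerivAt h1 (ξ / 2 * h1 ξ - h ξ - 1) ξ := by
    intro ξ hξ
    have hposu : 0 < u (ξ, -1) := hpos ξ hξ
    have hD := hsecond _ hu4 (Ioi (Real.sqrt 2)) isOpen_Ioi
      (fun y hy => ⟨hpos y hy, by norm_num⟩) ξ hξ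
    have hpde := hu5 (ξ, -1) hposu (by norm_num)
    have hkey : deriv h1 ξ = ξ / 2 * h1 ξ - h ξ - 1 := by
      have h2 := hut ξ
      have h3 : uxx u (ξ, -1) = deriv h1 ξ := rfl
      rw [← h3]
      linarith [hpde, h2]
    rw [← hkey]
    exact hD
  exact partD hcpos hcont_h hcont_h' hder1 hODEout hb hb1 hpos

end
end

section
/- Let (a_m)_{m ≥ 0} be a sequence of real numbers satisfying the recursion a_{m+2} = ((m/2 − 1) a_m + (√2/2)(m+1) a_{m+1}) / ((m+2)(m+1)) for all integers m ≥ 1. If a_3 < 0 and a_4 < 0, then a_m < 0 for every integer m ≥ 3. -/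
/-! For `m ≥ 3` both coefficients `m/2 - 1` and `(√2/2)(m+1)` of the recursion are positive, so
`a_{m+2}` is a positive combination of `a_m` and `a_{m+1}`, and negativity propagates by a
two-step induction from `a₃, a₄`. -/

theorem Nat.forall_ge_of_two_step {P : ℕ → Prop} {N : ℕ} (h₀ : P N) (h₁ : P (N + 1))
    (step : ∀ n, N ≤ n → P n → P (n + 1) → P (n + 2)) : ∀ n, N ≤ n → P n := by
  have pair : ∀ n, N ≤ n → P n ∧ P (n + 1) := by
    intro n hn
    induction n, hn using Nat.le_induction with
    | base => exact ⟨h₀, h₁⟩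
    | succ n hn ih => exact ⟨ih.2, step n hn ih.1 ih.2⟩
  exact fun n hn => (pair n hn).1

theorem div_neg_of_pos_comb {c d e x y : ℝ} (hc : 0 < c) (hd : 0 < d) (he : 0 < e)
    (hx : x < 0) (hy : y < 0) : (c * x + d * y) / e < 0 :=
  div_neg_of_neg_of_pos
    (add_neg (mul_neg_of_pos_of_neg hc hx) (mul_neg_of_pos_of_neg hd hy)) he

/-- for a sequence satisfying the recursion
`a_{m+2} = ((m/2 - 1)aₘ + (√2/2)(m+1)a_{m+1}) / ((m+2)(m+1))` for `m ≥ 1`, negativity of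
`a₃` and `a₄` forces `aₘ < 0` for all `m ≥ 3`. -/
theorem stmt19 (a : ℕ → ℝ)
    (hrec : ∀ m : ℕ, 1 ≤ m →
      a (m + 2) = (((m : ℝ) / 2 - 1) * a m + (Real.sqrt 2 / 2) * ((m : ℝ) + 1) * a (m + 1)) /
        (((m : ℝ) + 2) * ((m : ℝ) + 1)))
    (h3 : a 3 < 0) (h4 : a 4 < 0) :
    ∀ m : ℕ, 3 ≤ m → a m < 0 := by
  refine Nat.forall_ge_of_two_step h3 h4 fun m hm ham ham₁ => ?_
  have hm' : (3 : ℝ) ≤ m := by exact_mod_cast hm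
  rw [hrec m (by omega)]
  exact div_neg_of_pos_comb (by linarith) (by positivity) (by positivity) ham ham₁
end
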